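/- arXiv:1909.09239 — 5 statements merged into one kernel-verified Lean document; each statement's English description precedes it below -/
import Mathlib

section
/- Let ȳ > 0, let I be a hyperinterval in ℝ^d, and let g : I × [0,ȳ] → ℂ be such that: for each x ∈ I the map y ↦ g(x,y) is twice continuously differentiable on [0,ȳ]; there is a constant M₀ with |g(x,y)| ≤ M₀, |∂_y g(x,y)| ≤ M₀ and |∂²_y g(x,y)| ≤ M₀ for all (x,y) ∈ I × [0,ȳ]; for each y ∈ [0,ȳ] the functions x ↦ g(x,y), x ↦ ∂_y g(x,y), x ↦ ∂²_y g(x,y) are measurable and belong to L²(I), with sup_{y∈[0,ȳ]} (‖g(·,y)‖_{L²(I)} + ‖∂_y g(·,y)‖_{L²(I)} + ‖∂²_y g(·,y)‖_{L²(I)}) < ∞. Then there exist y₀ ∈ (0, ȳ] with y₀ M₀ < 1 and a constant M such that for every y ∈ (0, y₀], ‖ (1/y)·Log(1 + y·g(·,y)) − g(·,0) ‖_{L²(I)} ≤ M·y, where Log is the principal branch of the complex logarithm (well defined since |y·g(x,y)| < 1). -/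
/-!
With `z = y g(x,y)`, split
`(1/y) Log(1 + z) - g(x,0) = (1/y) (Log(1 + z) - z) + (g(x,y) - g(x,0))`.
Once `|z| ≤ 1/2`, the Taylor bound `|Log(1 + z) - z| ≤ |z|²` makes the first term at most
`M₀² y`, and the mean value inequality makes the second at most `M₀ y`. This pointwise
`O(y)` bound is uniform in `x`, so on the bounded box `I` it becomes an `L²` bound
with the extra factor `vol(I)^{1/2}`.
-/

open MeasureTheory
open scoped ENNReal

namespace Complex

lemma norm_log_one_add_sub_self_le_sq {z : ℂ} (hz : ‖z‖ ≤ 1 / 2) :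
    ‖log (1 + z) - z‖ ≤ ‖z‖ ^ 2 := by
  have hinv : (1 - ‖z‖)⁻¹ ≤ 2 := by
    rw [inv_le_comm₀ (by linarith) two_pos]
    linarith
  calc ‖log (1 + z) - z‖ ≤ ‖z‖ ^ 2 * (1 - ‖z‖)⁻¹ / 2 :=
        norm_log_one_add_sub_self_le (hz.trans_lt one_half_lt_one)
    _ ≤ ‖z‖ ^ 2 * 2 / 2 := by gcongr
    _ = ‖z‖ ^ 2 := by ring

lemma norm_one_div_mul_log_one_add_mul_sub_le {y A : ℝ} {w : ℂ} (hy : 0 < y) (hw : ‖w‖ ≤ A)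
    (hyA : y * A ≤ 1 / 2) :
    ‖1 / (y : ℂ) * log (1 + y * w) - w‖ ≤ A ^ 2 * y := by
  have hyw : ‖(y : ℂ) * w‖ ≤ y * A := by
    rw [norm_mul, norm_real, Real.norm_of_nonneg hy.le]
    gcongr
  have hyne : (y : ℂ) ≠ 0 := ofReal_ne_zero.mpr hy.ne'
  have hfactor : 1 / (y : ℂ) * log (1 + y * w) - w = 1 / (y : ℂ) * (log (1 + y * w) - y * w) := by
    field_simp
  calc ‖1 / (y : ℂ) * log (1 + y * w) - w‖ = ‖log (1 + y * w) - y * w‖ / y := by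
        rw [hfactor, norm_mul, norm_div, norm_one, norm_real, Real.norm_of_nonneg hy.le]
        ring
    _ ≤ (y * A) ^ 2 / y := by
        gcongr
        exact (norm_log_one_add_sub_self_le_sq (hyw.trans hyA)).trans (by gcongr)
    _ = A ^ 2 * y := by field_simp

end Complex

lemma eLpNorm_restrict_le_of_forall_norm_le {α E : Type*} [MeasurableSpace α]
    [NormedAddCommGroup E] {μ : Measure α} {s : Set α} {f : α → E} {p : ℝ≥0∞} {C : ℝ}
    (hs : MeasurableSet s) (hμs : μ s ≠ ∞) (hf : ∀ x ∈ s, ‖f x‖ ≤ C) :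
    eLpNorm f p (μ.restrict s) ≤ ENNReal.ofReal ((μ s).toReal ^ p.toReal⁻¹ * C) := by
  have h := eLpNorm_le_of_ae_bound (p := p) ((ae_restrict_iff' (μ := μ) hs).mpr (.of_forall hf))
  rwa [Measure.restrict_apply_univ, ← ENNReal.ofReal_toReal hμs,
    ENNReal.ofReal_rpow_of_nonneg ENNReal.toReal_nonneg (by positivity),
    ← ENNReal.ofReal_mul (by positivity)] at h

lemma exists_mem_Ioc_mul_le_half {T A : ℝ} (hT : 0 < T) (hA : 0 ≤ A) :
    ∃ y₀ ∈ Set.Ioc 0 T, y₀ * A ≤ 1 / 2 := by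
  refine ⟨min T (1 / (2 * (A + 1))), ⟨lt_min hT (by positivity), min_le_left _ _⟩, ?_⟩
  calc _ ≤ 1 / (2 * (A + 1)) * A := by gcongr; exact min_le_right _ _
    _ ≤ 1 / 2 := by rw [div_mul_eq_mul_div, div_le_div_iff₀ (by positivity) two_pos]; linarith

lemma norm_one_div_mul_log_one_add_mul_sub_apply_zero_le {f f' : ℝ → ℂ} {T A y : ℝ}
    (hf : ∀ t ∈ Set.Icc 0 T, HasDerivWithinAt f (f' t) (Set.Icc 0 T) t)
    (hf' : ∀ t ∈ Set.Icc 0 T, ‖f' t‖ ≤ A) (hfy : ‖f y‖ ≤ A)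
    (hy : y ∈ Set.Ioc 0 T) (hyA : y * A ≤ 1 / 2) :
    ‖1 / (y : ℂ) * Complex.log (1 + y * f y) - f 0‖ ≤ (A ^ 2 + A) * y := by
  have hmvt : ‖f y - f 0‖ ≤ A * y := by
    simpa [abs_of_pos hy.1] using Convex.norm_image_sub_le_of_norm_hasDerivWithin_le hf hf'
      (convex_Icc 0 T) ⟨le_rfl, hy.1.le.trans hy.2⟩ (Set.Ioc_subset_Icc_self hy)
  calc _ = ‖(1 / (y : ℂ) * Complex.log (1 + y * f y) - f y) + (f y - f 0)‖ := by
        rw [sub_add_sub_cancel]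
    _ ≤ A ^ 2 * y + A * y :=
        norm_add_le_of_le (Complex.norm_one_div_mul_log_one_add_mul_sub_le hy.1 hfy hyA) hmvt
    _ = (A ^ 2 + A) * y := by ring

theorem stmt0_general
    (d : ℕ) (ybar : ℝ) (hybar : 0 < ybar)
    (a b : Fin d → ℝ)
    (I : Set (Fin d → ℝ)) (hI : I = Set.Icc a b)
    (g g1 g2 : (Fin d → ℝ) → ℝ → ℂ)
    (hderiv1 : ∀ x ∈ I, ∀ y ∈ Set.Icc (0:ℝ) ybar,
      HasDerivWithinAt (g x) (g1 x y) (Set.Icc (0:ℝ) ybar) y)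
    (M0 : ℝ)
    (hbound : ∀ x ∈ I, ∀ y ∈ Set.Icc (0:ℝ) ybar,
      ‖g x y‖ ≤ M0 ∧ ‖g1 x y‖ ≤ M0 ∧ ‖g2 x y‖ ≤ M0) :
    ∃ y₀ ∈ Set.Ioc (0:ℝ) ybar, y₀ * M0 < 1 ∧ ∃ M : ℝ, ∀ y ∈ Set.Ioc (0:ℝ) y₀,
      eLpNorm
        (fun x => (1 / (y:ℂ)) * Complex.log (1 + (y:ℂ) * g x y) - g x 0) 2
        (volume.restrict I) ≤ ENNReal.ofReal (M * y) := by
  obtain ⟨y₀, hy₀, hy₀M0⟩ := exists_mem_Ioc_mul_le_half hybar (abs_nonneg M0)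
  refine ⟨y₀, hy₀, ?_, (volume I).toReal ^ (2⁻¹ : ℝ) * (|M0| ^ 2 + |M0|), fun y hy => ?_⟩
  · calc y₀ * M0 ≤ y₀ * |M0| := by gcongr; exacts [hy₀.1.le, le_abs_self M0]
      _ < 1 := by linarith
  have hyy₀ : y ∈ Set.Ioc 0 ybar := ⟨hy.1, hy.2.trans hy₀.2⟩
  have hpt : ∀ x ∈ I,
      ‖1 / (y : ℂ) * Complex.log (1 + y * g x y) - g x 0‖ ≤ (|M0| ^ 2 + |M0|) * y :=
    fun x hx => norm_one_div_mul_log_one_add_mul_sub_apply_zero_le (hderiv1 x hx)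
      (fun t ht => (hbound x hx t ht).2.1.trans (le_abs_self _))
      ((hbound x hx y (Set.Ioc_subset_Icc_self hyy₀)).1.trans (le_abs_self _)) hyy₀
      ((mul_le_mul_of_nonneg_right hy.2 (abs_nonneg _)).trans hy₀M0)
  subst hI
  have h := eLpNorm_restrict_le_of_forall_norm_le (p := 2) measurableSet_Icc
    (isCompact_Icc.measure_lt_top (μ := volume)).ne hpt
  rwa [ENNReal.toReal_ofNat, ← mul_assoc] at h

/-- If `g(x,y)` is twice continuously differentiable in `y` on `[0,ȳ]`,
uniformly bounded together with its first two `y`-derivatives by `M₀`, and `g`, `∂_y g`,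
`∂²_y g` lie in `L²(I)` uniformly in `y`, then there are `y₀ ∈ (0,ȳ]` with `y₀ M₀ < 1`
and a constant `M` such that for all `y ∈ (0,y₀]`,
`‖ (1/y)·Log(1 + y g(·,y)) − g(·,0) ‖_{L²(I)} ≤ M y`. -/
theorem stmt0
    (d : ℕ) (ybar : ℝ) (hybar : 0 < ybar)
    (a b : Fin d → ℝ)
    (I : Set (Fin d → ℝ)) (hI : I = Set.Icc a b)
    (g g1 g2 : (Fin d → ℝ) → ℝ → ℂ)
    (hderiv1 : ∀ x ∈ I, ∀ y ∈ Set.Icc (0:ℝ) ybar,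
      HasDerivWithinAt (g x) (g1 x y) (Set.Icc (0:ℝ) ybar) y)
    (hderiv2 : ∀ x ∈ I, ∀ y ∈ Set.Icc (0:ℝ) ybar,
      HasDerivWithinAt (g1 x) (g2 x y) (Set.Icc (0:ℝ) ybar) y)
    (hcont2 : ∀ x ∈ I, ContinuousOn (g2 x) (Set.Icc (0:ℝ) ybar))
    (M0 : ℝ)
    (hbound : ∀ x ∈ I, ∀ y ∈ Set.Icc (0:ℝ) ybar,
      ‖g x y‖ ≤ M0 ∧ ‖g1 x y‖ ≤ M0 ∧ ‖g2 x y‖ ≤ M0)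
    (hL2 : ∀ y ∈ Set.Icc (0:ℝ) ybar,
      MemLp (fun x => g x y) 2 (volume.restrict I) ∧
      MemLp (fun x => g1 x y) 2 (volume.restrict I) ∧
      MemLp (fun x => g2 x y) 2 (volume.restrict I))
    (K : ℝ)
    (hK : ∀ y ∈ Set.Icc (0:ℝ) ybar,
      eLpNorm (fun x => g x y) 2 (volume.restrict I)
        + eLpNorm (fun x => g1 x y) 2 (volume.restrict I)
        + eLpNorm (fun x => g2 x y) 2 (volume.restrict I) ≤ ENNReal.ofReal K) :
    ∃ y₀ ∈ Set.Ioc (0:ℝ) ybar, y₀ * M0 < 1 ∧ ∃ M : ℝ, ∀ y ∈ Set.Ioc (0:ℝ) y₀,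
      eLpNorm
        (fun x => (1 / (y:ℂ)) * Complex.log (1 + (y:ℂ) * g x y) - g x 0) 2
        (volume.restrict I) ≤ ENNReal.ofReal (M * y) :=
  stmt0_general d ybar hybar a b I hI g g1 g2 hderiv1 M0 hbound
end

section
/- In the directed inhomogeneous random graph model conditioned on bank 1 having type t, let f^{(N)}(k₁,k₂ | t) := E[e^{i k₁ d⁻ + i k₂ d⁺}] be the joint characteristic function of the in-degree d⁻ := Σ_{w=2}^N I_{w1} and out-degree d⁺ := Σ_{w=2}^N I_{1w}. Define λ⁻(t) := Σ_{t'∈[M]} P(t') κ(t',t) and λ⁺(t) := Σ_{t'∈[M]} P(t') κ(t,t'). Then there exists a constant C, depending only on M, P and κ (not on N, k₁, k₂ or t), such that for all N ≥ 2 with max_{s,s'} κ(s,s') ≤ N−1, all k₁,k₂ ∈ ℝ and all t ∈ [M]: | f^{(N)}(k₁,k₂ | t) − exp( λ⁻(t)(e^{i k₁} − 1) + λ⁺(t)(e^{i k₂} − 1) ) | ≤ C/(N−1). (The limiting function is the joint characteristic function of a pair of independent Poisson random variables with means λ⁻(t) and λ⁺(t).) -/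
/-!
The triples `(T_w, U_w, U'_w)` are i.i.d., so the joint characteristic function of the in- and
out-degree is `φ ^ n` with `n = N - 1` and
`φ = ∑ₛ P(s) (1 + κ(s,t)/n (e^{ik₁} - 1)) (1 + κ(t,s)/n (e^{ik₂} - 1))`,
which is `1 + z/n + O(1/n²)` for `z = λ⁻(t) (e^{ik₁} - 1) + λ⁺(t) (e^{ik₂} - 1)`.
Since `‖φ‖ ≤ 1` and `Re z ≤ 0`, also `‖e^{z/n}‖ ≤ 1`, hence
`‖φ ^ n - (e^{z/n}) ^ n‖ ≤ n ‖φ - e^{z/n}‖ = O(1/n)`.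
-/

open MeasureTheory ProbabilityTheory

/-- The uniform distribution on `[0,1]`. -/
noncomputable def unif01 : Measure ℝ := volume.restrict (Set.Icc (0:ℝ) 1)

/-- The law of a bank type: the discrete measure on `[M]` with mass function `P`. -/
noncomputable def typeMeasure (M : ℕ) (P : Fin M → ℝ) : Measure (Fin M) :=
  ∑ s, ENNReal.ofReal (P s) • Measure.dirac s

lemma norm_pow_sub_pow_le_of_norm_le_one {R : Type*} [SeminormedRing R] [NormOneClass R]
    {a b : R} (ha : ‖a‖ ≤ 1) (hb : ‖b‖ ≤ 1) (n : ℕ) :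
    ‖a ^ n - b ^ n‖ ≤ n * ‖a - b‖ := by
  induction n with
  | zero => simp
  | succ n ih =>
    have hbn : ‖b ^ n‖ ≤ 1 := (norm_pow_le b n).trans (pow_le_one₀ (norm_nonneg b) hb)
    calc ‖a ^ (n + 1) - b ^ (n + 1)‖ = ‖a * (a ^ n - b ^ n) + (a - b) * b ^ n‖ := by
          rw [pow_succ' a, pow_succ' b]; congr 1; noncomm_ring
      _ ≤ ‖a‖ * ‖a ^ n - b ^ n‖ + ‖a - b‖ * ‖b ^ n‖ :=
          (norm_add_le _ _).trans (add_le_add (norm_mul_le _ _) (norm_mul_le _ _))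
      _ ≤ 1 * (n * ‖a - b‖) + ‖a - b‖ * 1 := by gcongr
      _ = (n + 1 : ℕ) * ‖a - b‖ := by push_cast; ring

open Complex in
lemma norm_pow_sub_exp_le {a z : ℂ} {n : ℕ} (ha : ‖a‖ ≤ 1) (hz : z.re ≤ 0)
    (hzn : ‖z‖ ≤ n) :
    ‖a ^ n - exp z‖ ≤ n * ‖a - (1 + z / n)‖ + ‖z‖ ^ 2 / n := by
  rcases Nat.eq_zero_or_pos n with rfl | hn
  · simp_all
  have hn' : (0 : ℝ) < n := Nat.cast_pos.mpr hn
  have hexp_pow : exp (z / n) ^ n = exp z := by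
    rw [← exp_nat_mul, mul_div_cancel₀ _ (Nat.cast_ne_zero.mpr hn.ne')]
  have hexp_norm : ‖exp (z / n)‖ ≤ 1 := by
    rw [norm_exp, Real.exp_le_one_iff, div_natCast_re]
    exact div_nonpos_of_nonpos_of_nonneg hz hn'.le
  have hzn' : ‖z / n‖ ≤ 1 := by
    rw [norm_div, norm_natCast]; exact div_le_one_of_le₀ hzn hn'.le
  calc ‖a ^ n - exp z‖ ≤ n * ‖a - exp (z / n)‖ := by
        rw [← hexp_pow]; exact norm_pow_sub_pow_le_of_norm_le_one ha hexp_norm n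
    _ ≤ n * (‖a - (1 + z / n)‖ + ‖z / n‖ ^ 2) := by
        gcongr
        calc ‖a - exp (z / n)‖ = ‖(a - (1 + z / n)) - (exp (z / n) - 1 - z / n)‖ := by
              ring_nf
          _ ≤ _ := (norm_sub_le _ _).trans (by gcongr; exact norm_exp_sub_one_sub_id_le hzn')
    _ = n * ‖a - (1 + z / n)‖ + ‖z‖ ^ 2 / n := by
        rw [norm_div, norm_natCast]; field_simp

lemma norm_pow_sub_exp_le_of_norm_sub_le {a z : ℂ} {n : ℕ} {B B' : ℝ} (hn : 0 < n)
    (ha : ‖a‖ ≤ 1) (hz : z.re ≤ 0) (hzB : ‖z‖ ≤ B)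
    (hB' : ‖a - (1 + z / n)‖ ≤ B' / n ^ 2) :
    ‖a ^ n - Complex.exp z‖ ≤ (B ^ 2 + B' + 2 * B) / n := by
  have hn' : (0 : ℝ) < n := Nat.cast_pos.mpr hn
  have hB'0 : 0 ≤ B' := by
    have := (norm_nonneg _).trans hB'
    rwa [le_div_iff₀ (by positivity), zero_mul] at this
  have hB0 : 0 ≤ B := (norm_nonneg z).trans hzB
  by_cases hzn : ‖z‖ ≤ n
  · calc ‖a ^ n - Complex.exp z‖ ≤ n * ‖a - (1 + z / n)‖ + ‖z‖ ^ 2 / n :=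
          norm_pow_sub_exp_le ha hz hzn
      _ ≤ n * (B' / n ^ 2) + B ^ 2 / n := by gcongr
      _ ≤ (B ^ 2 + B' + 2 * B) / n := by
          rw [show (n : ℝ) * (B' / n ^ 2) = B' / n by field_simp]
          rw [← add_div]; exact div_le_div_of_nonneg_right (by linarith) hn'.le
  · have hexp : ‖Complex.exp z‖ ≤ 1 := by rwa [Complex.norm_exp, Real.exp_le_one_iff]
    have han : ‖a ^ n‖ ≤ 1 := (norm_pow_le' a hn).trans (pow_le_one₀ (norm_nonneg a) ha)
    calc ‖a ^ n - Complex.exp z‖ ≤ 1 + 1 := (norm_sub_le _ _).trans (add_le_add han hexp)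
      _ ≤ 2 * B / n := by rw [le_div_iff₀ hn']; nlinarith
      _ ≤ (B ^ 2 + B' + 2 * B) / n := by gcongr; nlinarith

lemma Complex.re_sub_one_nonpos {c : ℂ} (hc : ‖c‖ ≤ 1) : (c - 1).re ≤ 0 := by
  simpa using (Complex.re_le_norm c).trans hc

lemma Complex.norm_sub_one_le_two {c : ℂ} (hc : ‖c‖ ≤ 1) : ‖c - 1‖ ≤ 2 :=
  (norm_sub_le c 1).trans (by rw [norm_one]; linarith)

lemma Complex.norm_one_add_mul_sub_one_le {p : ℝ} (hp0 : 0 ≤ p) (hp1 : p ≤ 1) {c : ℂ}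
    (hc : ‖c‖ ≤ 1) : ‖1 + p * (c - 1)‖ ≤ 1 :=
  calc ‖1 + p * (c - 1)‖ = ‖((1 - p : ℝ) : ℂ) + p * c‖ := by push_cast; ring_nf
    _ ≤ (1 - p) + p * ‖c‖ := by
        refine (norm_add_le _ _).trans ?_
        rw [norm_mul, Complex.norm_real, Complex.norm_real, Real.norm_of_nonneg (by linarith),
          Real.norm_of_nonneg hp0]
    _ ≤ 1 := by nlinarith

section WeightedSums

variable {ι : Type*} [Fintype ι] {P : ι → ℝ}

lemma sum_mul_le_of_forall_le (hP0 : ∀ s, 0 ≤ P s) (hP1 : ∑ s, P s = 1)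
    {f : ι → ℝ} {K : ℝ} (hf : ∀ s, f s ≤ K) : ∑ s, P s * f s ≤ K :=
  calc ∑ s, P s * f s ≤ ∑ s, P s * K :=
        Finset.sum_le_sum fun s _ => mul_le_mul_of_nonneg_left (hf s) (hP0 s)
    _ = K := by rw [← Finset.sum_mul, hP1, one_mul]

lemma sum_mul_one_add_mul_one_add (hP1 : ∑ s, P s = 1) (x y : ι → ℝ) (c d : ℂ) {n : ℂ}
    (hn : n ≠ 0) :
    ∑ s, (P s : ℂ) * ((1 + ((x s : ℂ) / n) * c) * (1 + ((y s : ℂ) / n) * d))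
      = 1 + ((∑ s, P s * x s : ℝ) * c + (∑ s, P s * y s : ℝ) * d) / n
        + (∑ s, P s * (x s * y s) : ℝ) * (c * d) / n ^ 2 := by
  have hP1' : ∑ s, (P s : ℂ) = 1 := by exact_mod_cast hP1
  have hterm : ∀ s, (P s : ℂ) * ((1 + ((x s : ℂ) / n) * c) * (1 + ((y s : ℂ) / n) * d))
      = P s + ((P s * x s) * c + (P s * y s) * d) / n
          + (P s * (x s * y s)) * (c * d) / n ^ 2 := by
    intro s; field_simp; ring
  simp only [hterm, Finset.sum_add_distrib, ← Finset.sum_div, ← Finset.sum_mul, hP1']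
  push_cast; rfl

lemma norm_sum_mul_one_add_mul_one_add_le_one (hP0 : ∀ s, 0 ≤ P s) (hP1 : ∑ s, P s = 1)
    {p q : ι → ℝ} (hp0 : ∀ s, 0 ≤ p s) (hp1 : ∀ s, p s ≤ 1) (hq0 : ∀ s, 0 ≤ q s)
    (hq1 : ∀ s, q s ≤ 1) {c d : ℂ} (hc : ‖c‖ ≤ 1) (hd : ‖d‖ ≤ 1) :
    ‖∑ s, (P s : ℂ) * ((1 + (p s : ℂ) * (c - 1)) * (1 + (q s : ℂ) * (d - 1)))‖ ≤ 1 := by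
  refine (norm_sum_le _ _).trans ?_
  calc ∑ s, ‖(P s : ℂ) * ((1 + (p s : ℂ) * (c - 1)) * (1 + (q s : ℂ) * (d - 1)))‖
      ≤ ∑ s, P s * (1 * 1) := Finset.sum_le_sum fun s _ => by
        rw [norm_mul, norm_mul, Complex.norm_real, Real.norm_of_nonneg (hP0 s)]
        gcongr
        · exact hP0 s
        · exact Complex.norm_one_add_mul_sub_one_le (hp0 s) (hp1 s) hc
        · exact Complex.norm_one_add_mul_sub_one_le (hq0 s) (hq1 s) hd
    _ = 1 := by simpa using hP1

lemma norm_sum_mul_pow_sub_exp_le (hP0 : ∀ s, 0 ≤ P s) (hP1 : ∑ s, P s = 1)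
    {x y : ι → ℝ} {n : ℕ} {K : ℝ} (hn : 0 < n)
    (hx0 : ∀ s, 0 ≤ x s) (hxn : ∀ s, x s ≤ n) (hxK : ∀ s, x s ≤ K)
    (hy0 : ∀ s, 0 ≤ y s) (hyn : ∀ s, y s ≤ n) (hyK : ∀ s, y s ≤ K)
    {c d : ℂ} (hc : ‖c‖ ≤ 1) (hd : ‖d‖ ≤ 1) :
    ‖(∑ s, (P s : ℂ) * ((1 + ((x s / n : ℝ) : ℂ) * (c - 1))
          * (1 + ((y s / n : ℝ) : ℂ) * (d - 1)))) ^ n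
        - Complex.exp (((∑ s, P s * x s : ℝ) : ℂ) * (c - 1)
          + ((∑ s, P s * y s : ℝ) : ℂ) * (d - 1))‖
      ≤ (20 * K ^ 2 + 8 * K) / n := by
  have hn' : (0 : ℝ) < n := Nat.cast_pos.mpr hn
  set a := ∑ s, (P s : ℂ) * ((1 + ((x s / n : ℝ) : ℂ) * (c - 1))
    * (1 + ((y s / n : ℝ) : ℂ) * (d - 1)))
  set z := ((∑ s, P s * x s : ℝ) : ℂ) * (c - 1) + ((∑ s, P s * y s : ℝ) : ℂ) * (d - 1)
  set ρ := ∑ s, P s * (x s * y s)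
  have hρ0 : 0 ≤ ρ :=
    Finset.sum_nonneg fun s _ => mul_nonneg (hP0 s) (mul_nonneg (hx0 s) (hy0 s))
  have ha : ‖a‖ ≤ 1 := norm_sum_mul_one_add_mul_one_add_le_one hP0 hP1
    (fun s => div_nonneg (hx0 s) hn'.le) (fun s => (div_le_one hn').mpr (hxn s))
    (fun s => div_nonneg (hy0 s) hn'.le) (fun s => (div_le_one hn').mpr (hyn s)) hc hd
  have hz_re : z.re ≤ 0 := by
    simp only [z, Complex.add_re, Complex.re_ofReal_mul]
    have h₁ := Complex.re_sub_one_nonpos hc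
    have h₂ := Complex.re_sub_one_nonpos hd
    have := Finset.sum_nonneg fun s (_ : s ∈ Finset.univ) => mul_nonneg (hP0 s) (hx0 s)
    have := Finset.sum_nonneg fun s (_ : s ∈ Finset.univ) => mul_nonneg (hP0 s) (hy0 s)
    nlinarith
  have hz : ‖z‖ ≤ 4 * K := by
    have hx0' : 0 ≤ ∑ s, P s * x s := Finset.sum_nonneg fun s _ => mul_nonneg (hP0 s) (hx0 s)
    have hy0' : 0 ≤ ∑ s, P s * y s := Finset.sum_nonneg fun s _ => mul_nonneg (hP0 s) (hy0 s)
    refine (norm_add_le _ _).trans ?_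
    rw [norm_mul, norm_mul, Complex.norm_real, Complex.norm_real, Real.norm_of_nonneg hx0',
      Real.norm_of_nonneg hy0']
    have hx := sum_mul_le_of_forall_le hP0 hP1 hxK
    have hy := sum_mul_le_of_forall_le hP0 hP1 hyK
    calc _ ≤ K * 2 + K * 2 :=
          add_le_add
            (mul_le_mul hx (Complex.norm_sub_one_le_two hc) (norm_nonneg _) (hx0'.trans hx))
            (mul_le_mul hy (Complex.norm_sub_one_le_two hd) (norm_nonneg _) (hy0'.trans hy))
      _ = 4 * K := by ring
  have hr : ‖a - (1 + z / n)‖ ≤ 4 * K ^ 2 / n ^ 2 := by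
    have hK : ∀ s, x s * y s ≤ K ^ 2 := fun s => by
      rw [sq]; exact mul_le_mul (hxK s) (hyK s) (hy0 s) ((hx0 s).trans (hxK s))
    have hρK : ρ ≤ K ^ 2 := sum_mul_le_of_forall_le hP0 hP1 hK
    have ha_eq : a - (1 + z / n) = ρ * ((c - 1) * (d - 1)) / (n : ℂ) ^ 2 := by
      simp only [a, z, ρ, Complex.ofReal_div, Complex.ofReal_natCast]
      rw [sum_mul_one_add_mul_one_add hP1 x y _ _ (Nat.cast_ne_zero.mpr hn.ne')]
      ring
    rw [ha_eq, norm_div, norm_mul, norm_mul, Complex.norm_real, Real.norm_of_nonneg hρ0, norm_pow,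
      Complex.norm_natCast]
    refine div_le_div_of_nonneg_right ?_ (by positivity)
    calc ρ * (‖c - 1‖ * ‖d - 1‖) ≤ K ^ 2 * (2 * 2) := by
          gcongr; exacts [Complex.norm_sub_one_le_two hc, Complex.norm_sub_one_le_two hd]
      _ = 4 * K ^ 2 := by ring
  calc _ ≤ ((4 * K) ^ 2 + 4 * K ^ 2 + 2 * (4 * K)) / n :=
        norm_pow_sub_exp_le_of_norm_sub_le hn ha hz_re hz hr
    _ = (20 * K ^ 2 + 8 * K) / n := by ring

end WeightedSums

instance : IsProbabilityMeasure unif01 := ⟨by simp [unif01, Real.volume_Icc]⟩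

lemma isProbabilityMeasure_typeMeasure {M : ℕ} {P : Fin M → ℝ} (hP0 : ∀ s, 0 ≤ P s)
    (hP1 : ∑ s, P s = 1) : IsProbabilityMeasure (typeMeasure M P) := by
  constructor
  simp only [typeMeasure, Measure.coe_finsetSum, Finset.sum_apply, Measure.smul_apply,
    measure_univ, smul_eq_mul, mul_one]
  rw [← ENNReal.ofReal_sum_of_nonneg fun s _ => hP0 s, hP1, ENNReal.ofReal_one]

instance (M : ℕ) (P : Fin M → ℝ) : IsFiniteMeasure (typeMeasure M P) := by
  constructor
  simp [typeMeasure, ENNReal.sum_lt_top]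

lemma integral_typeMeasure {M : ℕ} {P : Fin M → ℝ} (hP0 : ∀ s, 0 ≤ P s)
    (f : Fin M → ℂ) :
    ∫ s, f s ∂typeMeasure M P = ∑ s, (P s : ℂ) * f s := by
  rw [typeMeasure, integral_finsetSum_measure fun s _ =>
    (integrable_dirac enorm_lt_top).smul_measure ENNReal.ofReal_ne_top]
  refine Finset.sum_congr rfl fun s _ => ?_
  rw [integral_smul_measure, integral_dirac, ENNReal.toReal_ofReal (hP0 s), Complex.real_smul]

lemma integral_unif01_ite {p : ℝ} (hp0 : 0 ≤ p) (hp1 : p ≤ 1) (c : ℂ) :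
    ∫ u, (if u ≤ p then c else 1) ∂unif01 = 1 + p * (c - 1) := by
  have hIic : unif01.real (Set.Iic p) = p := by
    have hset : Set.Iic p ∩ Set.Icc 0 1 = Set.Icc 0 p :=
      Set.ext fun u => ⟨fun h => ⟨h.2.1, h.1⟩, fun h => ⟨h.2, h.1, h.2.trans hp1⟩⟩
    rw [measureReal_def, unif01, Measure.restrict_apply measurableSet_Iic, hset, Real.volume_Icc,
      sub_zero, ENNReal.toReal_ofReal hp0]
  have hite : (fun u : ℝ => if u ≤ p then c else 1)
      = fun u => (Set.Iic p).indicator (fun _ => c - 1) u + 1 := by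
    funext u; by_cases h : u ≤ p <;> simp [h]
  rw [hite, integral_add ((integrable_const _).indicator measurableSet_Iic) (integrable_const 1),
    integral_indicator_const _ measurableSet_Iic, hIic]
  simp only [Complex.real_smul, integral_const, probReal_univ, one_smul]; ring

lemma measurable_ite_mul_ite {M : ℕ} (p q : Fin M → ℝ) (c d : ℂ) :
    Measurable fun x : Fin M × ℝ × ℝ =>
      (if x.2.1 ≤ p x.1 then c else 1) * (if x.2.2 ≤ q x.1 then d else 1) :=
  have hp := (measurable_of_finite p).comp measurable_fst
  have hq := (measurable_of_finite q).comp measurable_fst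
  (Measurable.ite (measurableSet_le measurable_snd.fst hp) measurable_const measurable_const).mul
    (Measurable.ite (measurableSet_le measurable_snd.snd hq) measurable_const measurable_const)

lemma integral_typeMeasure_prod_unif01_ite {M : ℕ} {P : Fin M → ℝ} (hP0 : ∀ s, 0 ≤ P s)
    {p q : Fin M → ℝ} (hp0 : ∀ s, 0 ≤ p s) (hp1 : ∀ s, p s ≤ 1) (hq0 : ∀ s, 0 ≤ q s)
    (hq1 : ∀ s, q s ≤ 1) (c d : ℂ) :
    ∫ x, (if x.2.1 ≤ p x.1 then c else 1) * (if x.2.2 ≤ q x.1 then d else 1)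
        ∂(typeMeasure M P).prod (unif01.prod unif01)
      = ∑ s, (P s : ℂ) * ((1 + p s * (c - 1)) * (1 + q s * (d - 1))) := by
  have hint : Integrable (fun x : Fin M × ℝ × ℝ =>
      (if x.2.1 ≤ p x.1 then c else 1) * (if x.2.2 ≤ q x.1 then d else 1))
      ((typeMeasure M P).prod (unif01.prod unif01)) := by
    refine Integrable.of_bound (measurable_ite_mul_ite p q c d).aestronglyMeasurable
      ((‖c‖ + 1) * (‖d‖ + 1)) (ae_of_all _ fun x => ?_)
    rw [norm_mul]
    gcongr <;> split_ifs <;> simp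
  rw [integral_prod _ hint, integral_typeMeasure hP0]
  refine Finset.sum_congr rfl fun s _ => ?_
  rw [integral_prod_mul (fun u => if u ≤ p s then c else 1) (fun u => if u ≤ q s then d else 1),
    integral_unif01_ite (hp0 s) (hp1 s), integral_unif01_ite (hq0 s) (hq1 s)]

lemma integral_prod_comp_eq_pow_of_map_eq_pi {Ω α ι 𝕜 : Type*} [Fintype ι] [RCLike 𝕜]
    [MeasurableSpace Ω] [MeasurableSpace α] {μ : Measure Ω} {ν : Measure α}
    [IsProbabilityMeasure ν] {X : ι → Ω → α}
    (hX : μ.map (fun ω i => X i ω) = Measure.pi fun _ => ν) {g : α → 𝕜}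
    (hg : Measurable g) :
    ∫ ω, ∏ i, g (X i ω) ∂μ = (∫ x, g x ∂ν) ^ Fintype.card ι := by
  have hXm : AEMeasurable (fun ω i => X i ω) μ :=
    .of_map_ne_zero (hX ▸ IsProbabilityMeasure.ne_zero _)
  rw [← integral_fintype_prod_eq_pow, ← hX, integral_map hXm]
  exact (Finset.measurable_prod _ fun i _ => hg.comp (measurable_pi_apply i)).aestronglyMeasurable

lemma Complex.exp_I_mul_sum_ite_add {ι : Type*} [Fintype ι] (A B : ι → Prop) [DecidablePred A]
    [DecidablePred B] (k₁ k₂ : ℝ) :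
    Complex.exp (Complex.I * k₁ * ((∑ i, if A i then (1 : ℝ) else 0 : ℝ) : ℂ)
        + Complex.I * k₂ * ((∑ i, if B i then (1 : ℝ) else 0 : ℝ) : ℂ))
      = ∏ i, (if A i then Complex.exp (Complex.I * k₁) else 1)
          * (if B i then Complex.exp (Complex.I * k₂) else 1) := by
  push_cast
  rw [Finset.mul_sum, Finset.mul_sum, ← Finset.sum_add_distrib, Complex.exp_sum]
  refine Finset.prod_congr rfl fun i _ => ?_
  rw [Complex.exp_add]
  split_ifs <;> simp

theorem stmt2_general
    (M : ℕ)
    (P : Fin M → ℝ) (hP0 : ∀ s, 0 ≤ P s) (hP1 : ∑ s, P s = 1)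
    (κ : Fin M → Fin M → ℝ) (hκ0 : ∀ s s', 0 ≤ κ s s') :
    ∃ C : ℝ, ∀ (N : ℕ), 2 ≤ N → (∀ s s', κ s s' ≤ (N : ℝ) - 1) →
    ∀ (Ω : Type) (_ : MeasurableSpace Ω) (μ : Measure Ω), IsProbabilityMeasure μ →
    ∀ (T : Fin (N - 1) → Ω → Fin M) (U U' : Fin (N - 1) → Ω → ℝ),
    -- the `(T_w, U_w, U'_w)`, `w = 2,…,N`, are i.i.d. with `T_w ~ P`,
    -- `U_w, U'_w ~ Uniform[0,1]`, all three independent: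
    (Measure.map (fun ω => fun w : Fin (N - 1) => (T w ω, U w ω, U' w ω)) μ
      = Measure.pi (fun _ : Fin (N - 1) => (typeMeasure M P).prod (unif01.prod unif01))) →
    ∀ (k₁ k₂ : ℝ) (t : Fin M),
    ‖((∫ ω, Complex.exp (Complex.I * (k₁ : ℂ) *
            ((∑ w : Fin (N - 1), if U w ω ≤ κ (T w ω) t / ((N : ℝ) - 1) then (1:ℝ) else 0) : ℝ)
          + Complex.I * (k₂ : ℂ) *
            ((∑ w : Fin (N - 1), if U' w ω ≤ κ t (T w ω) / ((N : ℝ) - 1) then (1:ℝ) else 0) : ℝ)) ∂μ)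
        - Complex.exp
            (((∑ t' : Fin M, P t' * κ t' t : ℝ) : ℂ) * (Complex.exp (Complex.I * (k₁ : ℂ)) - 1)
           + ((∑ t' : Fin M, P t' * κ t t' : ℝ) : ℂ) * (Complex.exp (Complex.I * (k₂ : ℂ)) - 1)))‖
      ≤ C / ((N : ℝ) - 1) := by
  obtain ⟨K, hK⟩ := Finite.exists_le (Function.uncurry κ)
  refine ⟨20 * K ^ 2 + 8 * K, fun N hN hκN Ω _ μ _ T U U' hmap k₁ k₂ t => ?_⟩
  have := isProbabilityMeasure_typeMeasure hP0 hP1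
  have hn : 0 < N - 1 := by omega
  have hNn : (N : ℝ) - 1 = (N - 1 : ℕ) := by rw [Nat.cast_sub (by omega), Nat.cast_one]
  rw [hNn] at hκN ⊢
  have hprob0 : ∀ s s', 0 ≤ κ s s' / (N - 1 : ℕ) := fun s s' =>
    div_nonneg (hκ0 s s') (N - 1).cast_nonneg
  have hprob1 : ∀ s s', κ s s' / (N - 1 : ℕ) ≤ 1 := fun s s' =>
    (div_le_one (Nat.cast_pos.mpr hn)).mpr (hκN s s')
  have hE : ∀ k : ℝ, ‖Complex.exp (Complex.I * k)‖ ≤ 1 := fun k => by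
    rw [mul_comm, Complex.norm_exp_ofReal_mul_I]
  simp_rw [Complex.exp_I_mul_sum_ite_add]
  rw [integral_prod_comp_eq_pow_of_map_eq_pi (X := fun w ω => (T w ω, U w ω, U' w ω)) hmap
      (measurable_ite_mul_ite (fun s => κ s t / (N - 1 : ℕ)) (fun s => κ t s / (N - 1 : ℕ))
        (Complex.exp (Complex.I * k₁)) (Complex.exp (Complex.I * k₂))),
    Fintype.card_fin,
    integral_typeMeasure_prod_unif01_ite hP0 (p := fun s => κ s t / (N - 1 : ℕ))
      (q := fun s => κ t s / (N - 1 : ℕ)) (fun s => hprob0 s t) (fun s => hprob1 s t)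
      (fun s => hprob0 t s) (fun s => hprob1 t s)]
  exact norm_sum_mul_pow_sub_exp_le hP0 hP1 hn (fun s => hκ0 s t) (fun s => hκN s t)
    (fun s => hK (s, t)) (fun s => hκ0 t s) (fun s => hκN t s) (fun s => hK (t, s))
    (hE k₁) (hE k₂)

/-- There is a constant `C = C(M,P,κ)`, not depending on `N`, `k₁`, `k₂` or
`t`, such that the joint characteristic function `f^{(N)}(k₁,k₂∣t)` of the in/out degree of
bank 1 in the directed inhomogeneous random graph satisfies
`|f^{(N)}(k₁,k₂∣t) − exp(λ⁻(t)(e^{ik₁}−1) + λ⁺(t)(e^{ik₂}−1))| ≤ C/(N−1)`,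
where `λ⁻(t) = Σ_{t'} P(t')κ(t',t)` and `λ⁺(t) = Σ_{t'} P(t')κ(t,t')`. -/
theorem stmt2
    (M : ℕ) (hM : 2 ≤ M)
    (P : Fin M → ℝ) (hP0 : ∀ s, 0 ≤ P s) (hP1 : ∑ s, P s = 1)
    (κ : Fin M → Fin M → ℝ) (hκ0 : ∀ s s', 0 ≤ κ s s') :
    ∃ C : ℝ, ∀ (N : ℕ), 2 ≤ N → (∀ s s', κ s s' ≤ (N : ℝ) - 1) →
    ∀ (Ω : Type) (_ : MeasurableSpace Ω) (μ : Measure Ω), IsProbabilityMeasure μ →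
    ∀ (T : Fin (N - 1) → Ω → Fin M) (U U' : Fin (N - 1) → Ω → ℝ),
    -- the `(T_w, U_w, U'_w)`, `w = 2,…,N`, are i.i.d. with `T_w ~ P`,
    -- `U_w, U'_w ~ Uniform[0,1]`, all three independent:
    (Measure.map (fun ω => fun w : Fin (N - 1) => (T w ω, U w ω, U' w ω)) μ
      = Measure.pi (fun _ : Fin (N - 1) => (typeMeasure M P).prod (unif01.prod unif01))) →
    ∀ (k₁ k₂ : ℝ) (t : Fin M),
    ‖((∫ ω, Complex.exp (Complex.I * (k₁ : ℂ) *
            ((∑ w : Fin (N - 1), if U w ω ≤ κ (T w ω) t / ((N : ℝ) - 1) then (1:ℝ) else 0) : ℝ)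
          + Complex.I * (k₂ : ℂ) *
            ((∑ w : Fin (N - 1), if U' w ω ≤ κ t (T w ω) / ((N : ℝ) - 1) then (1:ℝ) else 0) : ℝ)) ∂μ)
        - Complex.exp
            (((∑ t' : Fin M, P t' * κ t' t : ℝ) : ℂ) * (Complex.exp (Complex.I * (k₁ : ℂ)) - 1)
           + ((∑ t' : Fin M, P t' * κ t t' : ℝ) : ℂ) * (Complex.exp (Complex.I * (k₂ : ℂ)) - 1)))‖
      ≤ C / ((N : ℝ) - 1) :=
  stmt2_general M P hP0 hP1 κ hκ0
end

section
/- Let G : [0,∞) × ℝ × [0,∞) → ℝ be a bounded measurable shock transmission function satisfying G(x,y,0) = 0 for all x,y, and G(x,y,z) = 0 whenever y ≥ 0. Let X, Y, Ω, B be mutually independent random variables, where X ≥ 0, Ω ≥ 0, Y has a probability density ρ_Y with respect to Lebesgue measure on ℝ, and B is Bernoulli with parameter p ∈ [0,1]. Define h(k,y) := E[e^{i k G(X, y, Ω)}] (the expectation over X and Ω with y fixed). Then for every k ∈ ℝ: E[ e^{i k G(X, Y, B·Ω)} ] = 1 + p · ∫_{−∞}^0 ρ_Y(y) ( h(k,y)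 − 1 ) dy. -/
/-!
Conditioning on `B`: with probability `1 - p` the shock `B·Ω` vanishes, so `G = 0` and the
integrand is `1`; with probability `p` it is `e^{ikG(X,Y,Ω)}`. Conditioning the latter on `Y`,
which is independent of `(X, Ω)`, gives `∫ ρ_Y h(k,·)`, and since `h(k,y) = 1` for `y ≥ 0` and
`ρ_Y` integrates to `1`, this is `1 + ∫_{y<0} ρ_Y (h(k,·) - 1)`.
-/

open MeasureTheory ProbabilityTheory Complex

lemma norm_cexp_I_mul_ofReal_mul_ofReal (k t : ℝ) : ‖cexp (I * k * t)‖ = 1 := by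
  rw [mul_assoc, ← ofReal_mul, norm_exp_I_mul_ofReal]

lemma integrable_cexp_I_mul_ofReal_mul_ofReal {γ : Type*} [MeasurableSpace γ] {ν : Measure γ}
    [IsFiniteMeasure ν] (k : ℝ) {g : γ → ℝ} (hg : Measurable g) :
    Integrable (fun c ↦ cexp (I * k * g c)) ν :=
  .of_bound (by fun_prop) 1
    (Filter.Eventually.of_forall fun c ↦ (norm_cexp_I_mul_ofReal_mul_ofReal k (g c)).le)

lemma MeasureTheory.Integrable.integral_map_prod_right {Ω α β E : Type*} [MeasurableSpace Ω]
    [MeasurableSpace α] [MeasurableSpace β] [NormedAddCommGroup E] [NormedSpace ℝ E]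
    {μ : Measure Ω} [IsFiniteMeasure μ] {ν : Measure β} [SFinite ν] {X : Ω → α}
    (hX : AEMeasurable X μ) {f : α × β → E} (hf : Integrable f ((μ.map X).prod ν)) :
    Integrable (fun y ↦ ∫ ω, f (X ω, y) ∂μ) ν :=
  hf.integral_prod_right.congr (hf.prod_left_ae.mono fun _ hy ↦ integral_map hX hy.1)

namespace ProbabilityTheory

variable {Ω α β E : Type*} [MeasurableSpace Ω] [MeasurableSpace α] [MeasurableSpace β]
  [NormedAddCommGroup E] [NormedSpace ℝ E] {μ : Measure Ω}

lemma iIndepFun.indepFun_prodMk₃ {ι : Type*} {γ : ι → Type*} [∀ i, MeasurableSpace (γ i)]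
    {f : ∀ i, Ω → γ i} (hf : iIndepFun f μ) (hf_meas : ∀ i, Measurable (f i))
    (i j k l : ι) (hil : i ≠ l) (hjl : j ≠ l) (hkl : k ≠ l) :
    IndepFun (fun ω ↦ (f i ω, f j ω, f k ω)) (f l) μ := by
  classical
  have hS : Disjoint ({i, j, k} : Finset ι) {l} := by simp [hil.symm, hjl.symm, hkl.symm]
  exact (hf.indepFun_finset {i, j, k} {l} hS hf_meas).comp
    (φ := fun v : ∀ m : ({i, j, k} : Finset ι), γ m ↦
      (v ⟨i, by simp⟩, v ⟨j, by simp⟩, v ⟨k, by simp⟩))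
    (ψ := fun v : ∀ m : ({l} : Finset ι), γ m ↦ v ⟨l, by simp⟩)
    (by fun_prop) (measurable_pi_apply (X := fun m : ({l} : Finset ι) ↦ γ m) ⟨l, by simp⟩)

lemma IndepFun.integral_comp_eq_integral_integral [IsFiniteMeasure μ] {X : Ω → α} {Y : Ω → β}
    (hXY : IndepFun X Y μ) (hX : AEMeasurable X μ) (hY : AEMeasurable Y μ) {f : α × β → E}
    (hf : Integrable f ((μ.map X).prod (μ.map Y))) :
    ∫ ω, f (X ω, Y ω) ∂μ = ∫ y, ∫ ω, f (X ω, y) ∂μ ∂(μ.map Y) := by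
  rw [← integral_map (hX.prodMk hY) (by rw [hXY.map_prod_eq_prod_map_map hX hY]; exact hf.1),
    hXY.map_prod_eq_prod_map_map hX hY, integral_prod_symm f hf]
  refine integral_congr_ae (hf.prod_left_ae.mono fun y hy ↦ ?_)
  exact integral_map hX hy.1

end ProbabilityTheory

lemma integral_bernoulli {E : Type*} [NormedAddCommGroup E] [NormedSpace ℝ E] [CompleteSpace E]
    {p : ℝ} (hp0 : 0 ≤ p) (hp1 : p ≤ 1) (g : ℝ → E) :
    ∫ b, g b ∂(ENNReal.ofReal p • Measure.dirac 1 + ENNReal.ofReal (1 - p) • Measure.dirac 0)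
      = p • g 1 + (1 - p) • g 0 := by
  rw [integral_add_measure, integral_smul_measure, integral_smul_measure, integral_dirac,
    integral_dirac, ENNReal.toReal_ofReal hp0, ENNReal.toReal_ofReal (by linarith)]
  · exact (integrable_dirac enorm_lt_top).smul_measure ENNReal.ofReal_ne_top
  · exact (integrable_dirac enorm_lt_top).smul_measure ENNReal.ofReal_ne_top

lemma integral_withDensity_eq_one_add_setIntegral {α : Type*} [MeasurableSpace α]
    {μ : Measure α} {ρ : α → ℝ} (hρm : Measurable ρ) (hρ0 : ∀ x, 0 ≤ ρ x)
    [IsProbabilityMeasure (μ.withDensity fun x ↦ ENNReal.ofReal (ρ x))] {g : α → ℂ}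
    (hg : Integrable g (μ.withDensity fun x ↦ ENNReal.ofReal (ρ x))) {s : Set α}
    (hgs : ∀ x ∉ s, g x = 1) :
    ∫ x, g x ∂(μ.withDensity fun x ↦ ENNReal.ofReal (ρ x))
      = 1 + ∫ x in s, (ρ x : ℂ) * (g x - 1) ∂μ := by
  have hsub := integral_sub hg (integrable_const (1 : ℂ))
  rw [integral_const, probReal_univ, one_smul, eq_sub_iff_add_eq] at hsub
  rw [← hsub, add_comm, integral_withDensity_eq_integral_toReal_smul hρm.ennreal_ofReal
      (Filter.Eventually.of_forall fun _ ↦ ENNReal.ofReal_lt_top),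
    setIntegral_eq_integral_of_forall_compl_eq_zero fun x hx ↦ by simp [hgs x hx]]
  simp_rw [ENNReal.toReal_ofReal (hρ0 _), Complex.real_smul]

theorem stmt7_general
    (Ωs : Type) [MeasurableSpace Ωs] (μ : Measure Ωs) [IsProbabilityMeasure μ]
    (G : ℝ → ℝ → ℝ → ℝ)
    (hGmeas : Measurable fun q : ℝ × ℝ × ℝ => G q.1 q.2.1 q.2.2)
    (hG0 : ∀ x y, 0 ≤ x → G x y 0 = 0)
    (hGy : ∀ x y z, 0 ≤ x → 0 ≤ z → 0 ≤ y → G x y z = 0)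
    (X Y O B : Ωs → ℝ)
    (hXm : Measurable X) (hYm : Measurable Y) (hOm : Measurable O) (hBm : Measurable B)
    (hX0 : ∀ ω, 0 ≤ X ω) (hO0 : ∀ ω, 0 ≤ O ω)
    -- `X, Y, Ω, B` are mutually independent:
    (hindep : iIndepFun ![X, Y, O, B] μ)
    (ρY : ℝ → ℝ) (hρm : Measurable ρY) (hρ0 : ∀ y, 0 ≤ ρY y)
    -- `Y` has density `ρ_Y` with respect to Lebesgue measure:
    (hYlaw : Measure.map Y μ = volume.withDensity fun y => ENNReal.ofReal (ρY y))
    (p : ℝ) (hp : p ∈ Set.Icc (0:ℝ) 1)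
    -- `B` is Bernoulli with parameter `p`:
    (hBlaw : Measure.map B μ
      = ENNReal.ofReal p • Measure.dirac (1:ℝ) + ENNReal.ofReal (1 - p) • Measure.dirac 0)
    (k : ℝ) :
    ∫ ω, Complex.exp (Complex.I * (k : ℂ) * (G (X ω) (Y ω) (B ω * O ω) : ℝ)) ∂μ
      = 1 + (p : ℂ) * ∫ y in Set.Iio (0:ℝ),
          (ρY y : ℂ) *
            ((∫ ω, Complex.exp (Complex.I * (k : ℂ) * (G (X ω) y (O ω) : ℝ)) ∂μ) - 1) := by
  have hmeas : ∀ i, Measurable (![X, Y, O, B] i) := by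
    intro i; fin_cases i <;> assumption
  have h_integrate_B : ∫ ω, cexp (I * k * G (X ω) (Y ω) (B ω * O ω)) ∂μ
      = p * ∫ ω, cexp (I * k * G (X ω) (Y ω) (O ω)) ∂μ + (1 - p) := by
    have hXYO_B : IndepFun (fun ω ↦ (X ω, Y ω, O ω)) B μ :=
      hindep.indepFun_prodMk₃ hmeas 0 1 2 3 (by decide) (by decide) (by decide)
    have hF : Integrable (fun q : (ℝ × ℝ × ℝ) × ℝ ↦ cexp (I * k * G q.1.1 q.1.2.1 (q.2 * q.1.2.2)))
        ((μ.map fun ω ↦ (X ω, Y ω, O ω)).prod (μ.map B)) :=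
      integrable_cexp_I_mul_ofReal_mul_ofReal k (by fun_prop)
    rw [hXYO_B.integral_comp_eq_integral_integral (by fun_prop) hBm.aemeasurable hF, hBlaw,
      integral_bernoulli hp.1 hp.2]
    simp [hG0 _ _ (hX0 _), Complex.real_smul]
  have h_integrate_Y : ∫ ω, cexp (I * k * G (X ω) (Y ω) (O ω)) ∂μ
      = 1 + ∫ y in Set.Iio 0, (ρY y : ℂ) *
        ((∫ ω, cexp (I * k * G (X ω) y (O ω)) ∂μ) - 1) := by
    have hXO_Y : IndepFun (fun ω ↦ (X ω, O ω)) Y μ :=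
      hindep.indepFun_prodMk hmeas 0 2 1 (by decide) (by decide)
    have hF : Integrable (fun q : (ℝ × ℝ) × ℝ ↦ cexp (I * k * G q.1.1 q.2 q.1.2))
        ((μ.map fun ω ↦ (X ω, O ω)).prod (μ.map Y)) :=
      integrable_cexp_I_mul_ofReal_mul_ofReal k (by fun_prop)
    have hh := hF.integral_map_prod_right (by fun_prop)
    have : IsProbabilityMeasure (volume.withDensity fun y ↦ ENNReal.ofReal (ρY y)) :=
      hYlaw ▸ Measure.isProbabilityMeasure_map hYm.aemeasurable
    rw [hXO_Y.integral_comp_eq_integral_integral (by fun_prop) hYm.aemeasurable hF]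
    rw [hYlaw] at hh ⊢
    refine integral_withDensity_eq_one_add_setIntegral hρm hρ0 hh fun y hy ↦ ?_
    have hG : ∀ ω, G (X ω) y (O ω) = 0 := fun ω ↦ hGy _ _ _ (hX0 ω) (hO0 ω) (not_lt.mp hy)
    simp [hG]
  rw [h_integrate_B, h_integrate_Y]
  ring

/-- For a bounded measurable shock transmission function `G` with
`G(x,y,0) = 0` and `G(x,y,z) = 0` for `y ≥ 0`, and mutually independent `X, Y, Ω, B` with
`X, Ω ≥ 0`, `Y` having density `ρ_Y` and `B` Bernoulli(`p`), one has
`E[e^{ikG(X,Y,B·Ω)}] = 1 + p ∫_{−∞}^0 ρ_Y(y)(h(k,y) − 1) dy`, where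
`h(k,y) = E[e^{ikG(X,y,Ω)}]`. -/
theorem stmt7
    (Ωs : Type) [MeasurableSpace Ωs] (μ : Measure Ωs) [IsProbabilityMeasure μ]
    (G : ℝ → ℝ → ℝ → ℝ)
    (hGmeas : Measurable fun q : ℝ × ℝ × ℝ => G q.1 q.2.1 q.2.2)
    (CG : ℝ) (hGbd : ∀ x y z, |G x y z| ≤ CG)
    (hG0 : ∀ x y, 0 ≤ x → G x y 0 = 0)
    (hGy : ∀ x y z, 0 ≤ x → 0 ≤ z → 0 ≤ y → G x y z = 0)
    (X Y O B : Ωs → ℝ)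
    (hXm : Measurable X) (hYm : Measurable Y) (hOm : Measurable O) (hBm : Measurable B)
    (hX0 : ∀ ω, 0 ≤ X ω) (hO0 : ∀ ω, 0 ≤ O ω)
    -- `X, Y, Ω, B` are mutually independent:
    (hindep : iIndepFun ![X, Y, O, B] μ)
    (ρY : ℝ → ℝ) (hρm : Measurable ρY) (hρ0 : ∀ y, 0 ≤ ρY y)
    -- `Y` has density `ρ_Y` with respect to Lebesgue measure:
    (hYlaw : Measure.map Y μ = volume.withDensity fun y => ENNReal.ofReal (ρY y))
    (p : ℝ) (hp : p ∈ Set.Icc (0:ℝ) 1)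
    -- `B` is Bernoulli with parameter `p`:
    (hBlaw : Measure.map B μ
      = ENNReal.ofReal p • Measure.dirac (1:ℝ) + ENNReal.ofReal (1 - p) • Measure.dirac 0)
    (k : ℝ) :
    ∫ ω, Complex.exp (Complex.I * (k : ℂ) * (G (X ω) (Y ω) (B ω * O ω) : ℝ)) ∂μ
      = 1 + (p : ℂ) * ∫ y in Set.Iio (0:ℝ),
          (ρY y : ℂ) *
            ((∫ ω, Complex.exp (Complex.I * (k : ℂ) * (G (X ω) y (O ω) : ℝ)) ∂μ) - 1) :=
  stmt7_general Ωs μ G hGmeas hG0 hGy X Y O B hXm hYm hOm hBm hX0 hO0 hindep ρY hρm hρ0 hYlaw p hp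
    hBlaw k
end

section
/- Fix λ ∈ (0,1] and a > 0. Let Ω be a random variable with probability density ρ_Ω supported on (0,∞), and let X be an independent nonnegative random variable whose law is p₀·δ₀ + ρ_X(x)dx, where p₀ ∈ [0,1], δ₀ is the point mass at 0, and ρ_X is a density on (0,∞) with p₀ + ∫₀^∞ ρ_X(x)dx = 1. Let G_λ(x,y,z) := z · min(1, max(−y/(λ(x+z)), 0)) for z > 0, and G_λ(x,y,0) := 0; note G_λ(x, −aλ, z) = z·min(1, a/(x+z)). Then for every k ∈ ℝ: E[ e^{i k G_λ(X, −aλ, Ω)} − 1 ] = p₀ · P(Ω > a) · (e^{i k a} − 1) + ∫₀^a P(X ∈ [0, a−u)) ρ_Ω(u) (e^{i k u} − 1) du + ∫₀^a ( ∫_{a−u}^∞ ρ_Ω( u x/(a−u) ) · ( a x/(a−u)² ) · ρ_X(x) dx ) (e^{i k u} − 1) du, where P(X ∈ [0, a−u)) = p₀ + ∫₀^{a−u} ρ_X(x) dx. -/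
/-!
The argument works for any bounded measurable `f` in place of `t ↦ e^{ikt} - 1`. By independence,
`E[f(G)]` is an iterated integral against the laws of `X` and `Ω`, and for `z > 0`,
`G_λ(x, -aλ, z) = min(z, a z / (x + z))`. The atom of `X` at `0` contributes `E[f(min(Ω, a))]`,
whose atom at `a` is the `P(Ω > a)` term. For `x > 0` the substitution `z = u x / (a - u)` shows
that `G_λ(x, -aλ, Ω)` has a density `glamDensity a ρ_Ω x` on `(0, a)`; integrating it against
`ρ_X` and swapping the integrals (Fubini), the regions `x < a - u` and `x > a - u` give the last
two terms.
-/

open MeasureTheory ProbabilityTheory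

noncomputable def Glam (lam : ℝ) (x y z : ℝ) : ℝ :=
  z * min 1 (max (-(y / (lam * (x + z)))) 0)

open Set

section ChangeOfVariables

variable {a x : ℝ}

lemma image_mul_div_sub_Ioo (ha : 0 < a) (hx : 0 < x) :
    (fun u => u * x / (a - u)) '' Ioo (max 0 (a - x)) a = Ioi (max 0 (a - x)) := by
  ext z
  simp only [mem_image, mem_Ioo, mem_Ioi, max_lt_iff]
  constructor
  · rintro ⟨u, ⟨⟨hu0, hux⟩, hua⟩, rfl⟩
    have hau : 0 < a - u := by linarith
    exact ⟨by positivity, by rw [lt_div_iff₀ hau]; nlinarith⟩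
  · rintro ⟨hz0, hzx⟩
    have hxz : 0 < x + z := by linarith
    refine ⟨a * z / (x + z), ⟨⟨by positivity, ?_⟩, ?_⟩, ?_⟩
    · rw [lt_div_iff₀ hxz]; nlinarith
    · rw [div_lt_iff₀ hxz]; nlinarith
    · have hax : a - a * z / (x + z) = a * x / (x + z) := by field_simp; ring
      rw [hax]
      field_simp

lemma hasDerivAt_mul_div_sub {u : ℝ} (hu : u ≠ a) :
    HasDerivAt (fun u => u * x / (a - u)) (a * x / (a - u) ^ 2) u := by
  have hau : a - u ≠ 0 := sub_ne_zero.2 hu.symm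
  refine (((hasDerivAt_id' u).mul_const x).div
    ((hasDerivAt_const u a).sub (hasDerivAt_id' u)) hau).congr_deriv ?_
  simp only [Pi.sub_apply]
  ring

lemma injOn_mul_div_sub (ha : a ≠ 0) (hx : x ≠ 0) :
    InjOn (fun u => u * x / (a - u)) (Iio a) := by
  intro u hu v hv h
  rw [div_eq_div_iff (sub_ne_zero.2 (ne_of_gt hu)) (sub_ne_zero.2 (ne_of_gt hv))] at h
  exact mul_left_cancel₀ (mul_ne_zero hx ha) (by linear_combination h)

lemma mul_mul_div_sub_div_add {u : ℝ} (ha : a ≠ 0) (hx : x ≠ 0) (hu : u ≠ a) :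
    a * (u * x / (a - u)) / (x + u * x / (a - u)) = u := by
  have hau : a - u ≠ 0 := sub_ne_zero.2 hu.symm
  rw [show x + u * x / (a - u) = a * x / (a - u) by field_simp; ring]
  field_simp

variable {E : Type*} [NormedAddCommGroup E] [NormedSpace ℝ E]

lemma integral_Ioi_eq_integral_Ioo_mul_div_sub (ha : 0 < a) (hx : 0 < x) (g : ℝ → E) :
    ∫ z in Ioi (max 0 (a - x)), g z
      = ∫ u in Ioo (max 0 (a - x)) a, (a * x / (a - u) ^ 2) • g (u * x / (a - u)) := by
  rw [← image_mul_div_sub_Ioo ha hx, integral_image_eq_integral_abs_deriv_smul measurableSet_Ioo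
    (fun u hu => (hasDerivAt_mul_div_sub hu.2.ne).hasDerivWithinAt)
    ((injOn_mul_div_sub ha.ne' hx.ne').mono fun u hu => hu.2)]
  refine setIntegral_congr_fun measurableSet_Ioo fun u hu => ?_
  have hau : 0 < a - u := sub_pos.2 hu.2
  rw [abs_of_pos (by positivity)]

lemma integrableOn_Ioo_mul_div_sub_iff (ha : 0 < a) (hx : 0 < x) (g : ℝ → E) :
    IntegrableOn (fun u => (a * x / (a - u) ^ 2) • g (u * x / (a - u))) (Ioo (max 0 (a - x)) a)
      ↔ IntegrableOn g (Ioi (max 0 (a - x))) := by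
  rw [← image_mul_div_sub_Ioo ha hx, integrableOn_image_iff_integrableOn_abs_deriv_smul
    measurableSet_Ioo (fun u hu => (hasDerivAt_mul_div_sub hu.2.ne).hasDerivWithinAt)
    ((injOn_mul_div_sub ha.ne' hx.ne').mono fun u hu => hu.2)]
  refine integrableOn_congr_fun (fun u hu => ?_) measurableSet_Ioo
  have hau : 0 < a - u := sub_pos.2 hu.2
  rw [abs_of_pos (by positivity)]

end ChangeOfVariables

section Glam

variable {lam a x z : ℝ}

lemma Glam_neg_mul (hlam : lam ≠ 0) :
    Glam lam x (-(a * lam)) z = z * min 1 (max (a / (x + z)) 0) := by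
  rw [Glam, neg_div, neg_neg, mul_comm a lam, mul_div_mul_left _ _ hlam]

lemma Glam_neg_mul_of_mem_Ioc (hlam : lam ≠ 0) (hx : 0 ≤ x) (hz : z ∈ Ioc 0 (max 0 (a - x))) :
    Glam lam x (-(a * lam)) z = z := by
  obtain ⟨hz0, hzc⟩ := hz
  have hzx : z ≤ a - x := (le_max_iff.1 hzc).resolve_left hz0.not_ge
  rw [Glam_neg_mul hlam, max_eq_left (div_nonneg (by linarith) (by linarith)),
    min_eq_left ((one_le_div (by linarith)).2 (by linarith)), mul_one]

lemma Glam_neg_mul_of_mem_Ioi (hlam : lam ≠ 0) (ha : 0 ≤ a) (hx : 0 ≤ x)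
    (hz : z ∈ Ioi (max 0 (a - x))) : Glam lam x (-(a * lam)) z = a * z / (x + z) := by
  obtain ⟨hz0, hzx⟩ := max_lt_iff.1 (mem_Ioi.1 hz)
  rw [Glam_neg_mul hlam, max_eq_left (by positivity),
    min_eq_right ((div_le_one (by linarith)).2 (by linarith))]
  ring

lemma measurable_Glam (lam y : ℝ) : Measurable fun p : ℝ × ℝ => Glam lam p.1 y p.2 := by
  unfold Glam
  fun_prop

end Glam

section LawOfGlam

variable {E : Type*} [NormedAddCommGroup E] [NormedSpace ℝ E] {lam a x u : ℝ} {ρ : ℝ → ℝ}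
  {g : ℝ → E}

lemma integral_smul_Glam_neg_mul (hlam : lam ≠ 0) (ha : 0 ≤ a) (hx : 0 ≤ x)
    (hρ : ∀ z ≤ 0, ρ z = 0) (hg : Integrable fun z => ρ z • g (Glam lam x (-(a * lam)) z)) :
    ∫ z, ρ z • g (Glam lam x (-(a * lam)) z)
      = (∫ z in Ioc 0 (max 0 (a - x)), ρ z • g z)
        + ∫ z in Ioi (max 0 (a - x)), ρ z • g (a * z / (x + z)) := by
  rw [← setIntegral_eq_integral_of_forall_compl_eq_zero (s := Ioi 0) fun z hz => by
      rw [hρ z (not_lt.1 hz), zero_smul],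
    ← Ioc_union_Ioi_eq_Ioi (le_max_left 0 (a - x)),
    setIntegral_union Ioc_disjoint_Ioi_same measurableSet_Ioi hg.integrableOn hg.integrableOn]
  congr 1
  · exact setIntegral_congr_fun measurableSet_Ioc fun z hz => by
      rw [Glam_neg_mul_of_mem_Ioc hlam hx hz]
  · exact setIntegral_congr_fun measurableSet_Ioi fun z hz => by
      rw [Glam_neg_mul_of_mem_Ioi hlam ha hx hz]

lemma integral_smul_Glam_zero_neg_mul [CompleteSpace E] (hlam : lam ≠ 0) (ha : 0 < a)
    (hρ : ∀ z ≤ 0, ρ z = 0) (hg : Integrable fun z => ρ z • g (Glam lam 0 (-(a * lam)) z)) :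
    ∫ z, ρ z • g (Glam lam 0 (-(a * lam)) z)
      = (∫ z in Ioo 0 a, ρ z • g z) + (∫ z in Ioi a, ρ z) • g a := by
  rw [integral_smul_Glam_neg_mul hlam ha.le le_rfl hρ hg, sub_zero, max_eq_right ha.le,
    integral_Ioc_eq_integral_Ioo, ← integral_smul_const]
  congr 1
  refine setIntegral_congr_fun measurableSet_Ioi fun z hz => ?_
  rw [zero_add, mul_div_cancel_right₀ _ (ne_of_gt (ha.trans hz))]

/-- Density on `(0, a)` of `Glam λ x (-(a λ)) Ω` for `x > 0`, when `Ω` has density `ρ` on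
`(0, ∞)`: `Glam` is the identity for `z ≤ a - x` and `z ↦ a z / (x + z)` beyond, whose inverse
is `u ↦ u x / (a - u)`. -/
noncomputable def glamDensity (a : ℝ) (ρ : ℝ → ℝ) (x u : ℝ) : ℝ :=
  if u ≤ a - x then ρ u else ρ (u * x / (a - u)) * (a * x / (a - u) ^ 2)

lemma glamDensity_of_mem_Ioc (hu : u ∈ Ioc 0 (max 0 (a - x))) : glamDensity a ρ x u = ρ u :=
  if_pos ((le_max_iff.1 hu.2).resolve_left hu.1.not_ge)

lemma glamDensity_smul_of_mem_Ioo (ha : 0 < a) (hx : 0 < x) (hu : u ∈ Ioo (max 0 (a - x)) a) :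
    glamDensity a ρ x u • g u = (a * x / (a - u) ^ 2)
      • (ρ (u * x / (a - u)) • g (a * (u * x / (a - u)) / (x + u * x / (a - u)))) := by
  rw [glamDensity, if_neg (not_le.2 ((le_max_right _ _).trans_lt hu.1)),
    mul_mul_div_sub_div_add ha.ne' hx.ne' hu.2.ne, smul_smul, mul_comm]

lemma integrableOn_glamDensity_smul (hlam : lam ≠ 0) (ha : 0 < a) (hx : 0 < x)
    (hg : Integrable fun z => ρ z • g (Glam lam x (-(a * lam)) z)) :
    IntegrableOn (fun u => glamDensity a ρ x u • g u) (Ioo 0 a) := by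
  rw [← Ioc_union_Ioo_eq_Ioo (le_max_left 0 (a - x)) (max_lt ha (by linarith))]
  refine IntegrableOn.union ?_ ?_
  · refine hg.integrableOn.congr_fun (fun u hu => ?_) measurableSet_Ioc
    dsimp only
    rw [glamDensity_of_mem_Ioc hu, Glam_neg_mul_of_mem_Ioc hlam hx.le hu]
  · refine ((integrableOn_Ioo_mul_div_sub_iff ha hx
      fun z => ρ z • g (a * z / (x + z))).2 ?_).congr_fun
      (fun u hu => (glamDensity_smul_of_mem_Ioo ha hx hu).symm) measurableSet_Ioo
    exact hg.integrableOn.congr_fun (fun z hz => by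
      dsimp only
      rw [Glam_neg_mul_of_mem_Ioi hlam ha.le hx.le hz]) measurableSet_Ioi

lemma integral_glamDensity_smul (hlam : lam ≠ 0) (ha : 0 < a) (hx : 0 < x)
    (hρ : ∀ z ≤ 0, ρ z = 0) (hg : Integrable fun z => ρ z • g (Glam lam x (-(a * lam)) z)) :
    ∫ u in Ioo 0 a, glamDensity a ρ x u • g u = ∫ z, ρ z • g (Glam lam x (-(a * lam)) z) := by
  have hK := integrableOn_glamDensity_smul hlam ha hx hg
  rw [← Ioc_union_Ioo_eq_Ioo (le_max_left 0 (a - x)) (max_lt ha (by linarith))] at hK ⊢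
  rw [integral_smul_Glam_neg_mul hlam ha.le hx.le hρ hg,
    integral_Ioi_eq_integral_Ioo_mul_div_sub ha hx,
    setIntegral_union (Ioc_disjoint_Ioi_same.mono_right Ioo_subset_Ioi_self) measurableSet_Ioo
      (hK.mono_set subset_union_left) (hK.mono_set subset_union_right)]
  congr 1
  · exact setIntegral_congr_fun measurableSet_Ioc fun u hu => by rw [glamDensity_of_mem_Ioc hu]
  · exact setIntegral_congr_fun measurableSet_Ioo fun u hu => glamDensity_smul_of_mem_Ioo ha hx hu

end LawOfGlam

section DensityOfX

variable {E : Type*} [NormedAddCommGroup E] [NormedSpace ℝ E]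
  {lam a u M : ℝ} {ρ ρX : ℝ → ℝ} {f : ℝ → E}

lemma glamDensity_nonneg {x : ℝ} (ha : 0 ≤ a) (hx : 0 ≤ x) (hρ0 : ∀ z, 0 ≤ ρ z) (u : ℝ) :
    0 ≤ glamDensity a ρ x u := by
  unfold glamDensity
  split_ifs
  exacts [hρ0 u, mul_nonneg (hρ0 _) (by positivity)]

lemma measurable_glamDensity (hρ : Measurable ρ) :
    Measurable fun p : ℝ × ℝ => glamDensity a ρ p.1 p.2 :=
  Measurable.ite (measurableSet_le measurable_snd (measurable_const.sub measurable_fst))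
    (hρ.comp measurable_snd) ((hρ.comp (by fun_prop)).mul (by fun_prop))

lemma integral_mul_glamDensity (hρXsupp : ∀ x ≤ 0, ρX x = 0)
    (hint : Integrable fun x => ρX x * glamDensity a ρ x u) :
    ∫ x, ρX x * glamDensity a ρ x u
      = ρ u * (∫ x in Ico 0 (a - u), ρX x)
        + ∫ x in Ioi (a - u), ρ (u * x / (a - u)) * (a * x / (a - u) ^ 2) * ρX x := by
  rw [← setIntegral_univ, ← Iic_union_Ioi (a := a - u),
    setIntegral_union (Iic_disjoint_Ioi le_rfl) measurableSet_Ioi hint.integrableOn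
      hint.integrableOn]
  congr 1
  · rw [setIntegral_congr_fun measurableSet_Iic (g := fun x => ρ u * ρX x) fun x hx => by
        rw [glamDensity, if_pos (by linarith [mem_Iic.1 hx]), mul_comm],
      integral_const_mul, integral_Iic_eq_integral_Iio,
      setIntegral_eq_of_subset_of_forall_sdiff_eq_zero measurableSet_Iio Ico_subset_Iio_self
        fun x hx => hρXsupp x (not_le.1 fun h => hx.2 ⟨h, hx.1⟩).le]
  · exact setIntegral_congr_fun measurableSet_Ioi fun x hx => by
      rw [glamDensity, if_neg (by linarith [mem_Ioi.1 hx])]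
      ring

lemma integrableOn_glamDensity {x : ℝ} (ha : 0 < a) (hx : 0 < x) (hρ : Integrable ρ) :
    IntegrableOn (glamDensity a ρ x) (Ioo 0 a) := by
  simpa using integrableOn_glamDensity_smul (lam := 1) (g := fun _ => (1 : ℝ)) one_ne_zero ha hx
    (by simpa using hρ)

lemma integral_glamDensity {x : ℝ} (ha : 0 < a) (hx : 0 < x) (hρsupp : ∀ z ≤ 0, ρ z = 0)
    (hρ : Integrable ρ) : ∫ u in Ioo 0 a, glamDensity a ρ x u = ∫ z, ρ z := by
  simpa using integral_glamDensity_smul (lam := 1) (g := fun _ => (1 : ℝ)) one_ne_zero ha hx hρsupp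
    (by simpa using hρ)

lemma integrable_mul_glamDensity (ha : 0 < a) (hρ : Measurable ρ) (hρ0 : ∀ z, 0 ≤ ρ z)
    (hρsupp : ∀ z ≤ 0, ρ z = 0) (hρint : Integrable ρ) (hρX : Measurable ρX)
    (hρX0 : ∀ x, 0 ≤ ρX x) (hρXsupp : ∀ x ≤ 0, ρX x = 0) (hρXint : Integrable ρX) :
    Integrable (fun p : ℝ × ℝ => ρX p.1 * glamDensity a ρ p.1 p.2)
      (volume.prod (volume.restrict (Ioo 0 a))) := by
  refine (integrable_prod_iff ((hρX.comp measurable_fst).mul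
    (measurable_glamDensity hρ)).aestronglyMeasurable).2 ⟨ae_of_all _ fun x => ?_, ?_⟩
  · rcases le_or_gt x 0 with hx | hx
    · simp [hρXsupp x hx]
    · exact (integrableOn_glamDensity ha hx hρint).const_mul (ρX x)
  · refine (hρXint.mul_const (∫ z, ρ z)).congr (ae_of_all _ fun x => ?_)
    rcases le_or_gt x 0 with hx | hx
    · simp [hρXsupp x hx]
    · have hnorm (u : ℝ) : ‖ρX x * glamDensity a ρ x u‖ = ρX x * glamDensity a ρ x u :=
        Real.norm_of_nonneg (mul_nonneg (hρX0 x) (glamDensity_nonneg ha.le hx.le hρ0 u))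
      simp only [Pi.mul_apply, Function.comp_apply, hnorm]
      rw [integral_const_mul, integral_glamDensity ha hx hρsupp hρint]

lemma integrable_smul_comp_Glam (hρ : Integrable ρ) (hf : StronglyMeasurable f)
    (hfM : ∀ t, ‖f t‖ ≤ M) (lam y x : ℝ) : Integrable fun z => ρ z • f (Glam lam x y z) :=
  hρ.smul_bdd M (hf.comp_measurable ((measurable_Glam lam y).comp
    measurable_prodMk_left)).aestronglyMeasurable (ae_of_all _ fun _ => hfM _)

lemma integrableOn_mul_integral_Ico_smul {s : Set ℝ} (hρ : Integrable ρ)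
    (hρX0 : ∀ x, 0 ≤ ρX x) (hρX : Integrable ρX) (hf : StronglyMeasurable f)
    (hfM : ∀ t, ‖f t‖ ≤ M) :
    IntegrableOn (fun u => (ρ u * ∫ x in Ico 0 (a - u), ρX x) • f u) s := by
  have hI : Antitone fun u => ∫ x in Ico 0 (a - u), ρX x := fun u v huv =>
    setIntegral_mono_set hρX.integrableOn (ae_of_all _ hρX0)
      (Ico_subset_Ico_right (by linarith)).eventuallyLE
  refine (hρ.integrableOn.smul_bdd ((∫ x, ρX x) * M)
    (hI.measurable.aestronglyMeasurable.smul hf.aestronglyMeasurable)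
    (ae_of_all _ fun u => ?_)).congr (ae_of_all _ fun u => smul_smul _ _ _)
  change ‖(∫ x in Ico 0 (a - u), ρX x) • f u‖ ≤ _
  rw [norm_smul, Real.norm_of_nonneg (setIntegral_nonneg measurableSet_Ico fun x _ => hρX0 x)]
  exact mul_le_mul (setIntegral_le_integral hρX (ae_of_all _ hρX0)) (hfM u) (norm_nonneg _)
    (integral_nonneg hρX0)

lemma integral_smul_integral_smul_Glam [CompleteSpace E] (hlam : lam ≠ 0) (ha : 0 < a)
    (hρ : Measurable ρ) (hρ0 : ∀ z, 0 ≤ ρ z) (hρsupp : ∀ z ≤ 0, ρ z = 0) (hρint : Integrable ρ)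
    (hρX : Measurable ρX) (hρX0 : ∀ x, 0 ≤ ρX x) (hρXsupp : ∀ x ≤ 0, ρX x = 0)
    (hρXint : Integrable ρX) (hf : StronglyMeasurable f) (hfM : ∀ t, ‖f t‖ ≤ M) :
    ∫ x, ρX x • ∫ z, ρ z • f (Glam lam x (-(a * lam)) z)
      = (∫ u in Ioo 0 a, (ρ u * ∫ x in Ico 0 (a - u), ρX x) • f u)
        + ∫ u in Ioo 0 a,
            (∫ x in Ioi (a - u), ρ (u * x / (a - u)) * (a * x / (a - u) ^ 2) * ρX x) • f u := by
  have hK := integrable_mul_glamDensity ha hρ hρ0 hρsupp hρint hρX hρX0 hρXsupp hρXint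
  have hF : Integrable (fun p : ℝ × ℝ => (ρX p.1 * glamDensity a ρ p.1 p.2) • f p.2)
      (volume.prod (volume.restrict (Ioo 0 a))) :=
    hK.smul_bdd M (hf.comp_measurable measurable_snd).aestronglyMeasurable
      (ae_of_all _ fun p => hfM p.2)
  -- `x ↦ ρX x * glamDensity a ρ x u` is integrable only for almost every `u`.
  have hsplit := hK.prod_left_ae.mono fun u hu => integral_mul_glamDensity hρXsupp hu
  have hW : Integrable (fun u => (∫ x, ρX x * glamDensity a ρ x u) • f u)
      (volume.restrict (Ioo 0 a)) := by
    simpa only [integral_smul_const] using hF.integral_prod_right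
  have hB := integrableOn_mul_integral_Ico_smul (a := a) (s := Ioo 0 a) hρint hρX0 hρXint hf hfM
  calc ∫ x, ρX x • ∫ z, ρ z • f (Glam lam x (-(a * lam)) z)
      = ∫ x, ∫ u in Ioo 0 a, (ρX x * glamDensity a ρ x u) • f u := by
        refine integral_congr_ae (ae_of_all _ fun x => ?_)
        rcases le_or_gt x 0 with hx | hx
        · simp [hρXsupp x hx]
        · simp_rw [← integral_glamDensity_smul hlam ha hx hρsupp
            (integrable_smul_comp_Glam hρint hf hfM lam _ x), ← integral_smul, smul_smul]
    _ = ∫ u in Ioo 0 a, (∫ x, ρX x * glamDensity a ρ x u) • f u := by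
        rw [integral_integral_swap hF]
        simp_rw [integral_smul_const]
    _ = ∫ u in Ioo 0 a, ((ρ u * ∫ x in Ico 0 (a - u), ρX x) • f u
          + (∫ x in Ioi (a - u), ρ (u * x / (a - u)) * (a * x / (a - u) ^ 2) * ρX x) • f u) :=
        integral_congr_ae (hsplit.mono fun u hu => by simp only [hu, add_smul])
    _ = _ := integral_add hB ((hW.sub hB).congr (hsplit.mono fun u hu => by
        simp only [Pi.sub_apply, hu, add_smul, add_sub_cancel_left]))

end DensityOfX

section Probability

variable {E : Type*} [NormedAddCommGroup E] [NormedSpace ℝ E]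

lemma integral_withDensity_ofReal {α : Type*} [MeasurableSpace α] {μ : Measure α} {ρ : α → ℝ}
    (hρ : Measurable ρ) (hρ0 : ∀ x, 0 ≤ ρ x) (g : α → E) :
    ∫ x, g x ∂(μ.withDensity fun x => ENNReal.ofReal (ρ x)) = ∫ x, ρ x • g x ∂μ := by
  refine (integral_withDensity_eq_integral_smul hρ.real_toNNReal g).trans ?_
  simp_rw [NNReal.smul_def, Real.coe_toNNReal _ (hρ0 _)]

lemma integrable_of_isFiniteMeasure_withDensity_ofReal {α : Type*} [MeasurableSpace α]
    {μ : Measure α} {ρ : α → ℝ} (hρ : Measurable ρ) (hρ0 : ∀ x, 0 ≤ ρ x)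
    (hfin : IsFiniteMeasure (μ.withDensity fun x => ENNReal.ofReal (ρ x))) : Integrable ρ μ := by
  have : IsFiniteMeasure (μ.withDensity fun x => ((ρ x).toNNReal : ENNReal)) := hfin
  simpa [NNReal.smul_def, Real.coe_toNNReal _ (hρ0 _)] using
    (integrable_withDensity_iff_integrable_smul (μ := μ) hρ.real_toNNReal
      (g := fun _ => (1 : ℝ))).1 (integrable_const 1)

lemma toReal_measure_preimage_eq_setIntegral {Ω : Type*} [MeasurableSpace Ω] {μ : Measure Ω}
    {Y : Ω → ℝ} (hY : Measurable Y) {ρ : ℝ → ℝ} (hρ : Measurable ρ) (hρ0 : ∀ x, 0 ≤ ρ x)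
    (hlaw : μ.map Y = volume.withDensity fun x => ENNReal.ofReal (ρ x)) {s : Set ℝ}
    (hs : MeasurableSet s) : (μ (Y ⁻¹' s)).toReal = ∫ z in s, ρ z := by
  rw [← Measure.map_apply hY hs, hlaw, withDensity_apply _ hs,
    integral_eq_lintegral_of_nonneg_ae (ae_of_all _ hρ0) hρ.aestronglyMeasurable.restrict]

lemma integral_smul_dirac_add_withDensity [CompleteSpace E] {α : Type*} [MeasurableSpace α]
    [MeasurableSingletonClass α] {μ : Measure α} {ρ : α → ℝ} (hρ : Measurable ρ)
    (hρ0 : ∀ x, 0 ≤ ρ x) {p : ℝ} (hp : 0 ≤ p) {c : α} {g : α → E}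
    (hg : Integrable g (ENNReal.ofReal p • Measure.dirac c
      + μ.withDensity fun x => ENNReal.ofReal (ρ x))) :
    ∫ x, g x ∂(ENNReal.ofReal p • Measure.dirac c + μ.withDensity fun x => ENNReal.ofReal (ρ x))
      = p • g c + ∫ x, ρ x • g x ∂μ := by
  rw [integral_add_measure hg.left_of_add_measure hg.right_of_add_measure, integral_smul_measure,
    integral_dirac, ENNReal.toReal_ofReal hp, integral_withDensity_ofReal hρ hρ0]

lemma ProbabilityTheory.IndepFun.integral_comp_eq_integral_integral_s9 {Ω α β : Type*}
    [MeasurableSpace Ω] [MeasurableSpace α] [MeasurableSpace β] {μ : Measure Ω} [IsFiniteMeasure μ]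
    {X : Ω → α} {Y : Ω → β} (hX : Measurable X) (hY : Measurable Y) (h : IndepFun X Y μ)
    {F : α × β → E} (hF : Integrable F ((μ.map X).prod (μ.map Y))) :
    ∫ ω, F (X ω, Y ω) ∂μ = ∫ x, ∫ y, F (x, y) ∂(μ.map Y) ∂(μ.map X) := by
  have hmap := (indepFun_iff_map_prod_eq_prod_map_map hX.aemeasurable hY.aemeasurable).1 h
  rw [← integral_prod F hF, ← hmap,
    integral_map (hX.prodMk hY).aemeasurable (hmap ▸ hF.aestronglyMeasurable)]

end Probability

theorem integral_comp_Glam_of_indepFun {E : Type*} [NormedAddCommGroup E] [NormedSpace ℝ E]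
    [CompleteSpace E] {lam a : ℝ} (hlam : lam ≠ 0) (ha : 0 < a) {Ω : Type*} [MeasurableSpace Ω]
    {μ : Measure Ω} [IsFiniteMeasure μ] {X Om : Ω → ℝ} (hX : Measurable X)
    (hOm : Measurable Om) (hindep : IndepFun X Om μ) {ρ : ℝ → ℝ} (hρ : Measurable ρ)
    (hρ0 : ∀ z, 0 ≤ ρ z) (hρsupp : ∀ z ≤ 0, ρ z = 0)
    (hOlaw : μ.map Om = volume.withDensity fun z => ENNReal.ofReal (ρ z)) {p₀ : ℝ} (hp₀ : 0 ≤ p₀)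
    {ρX : ℝ → ℝ} (hρX : Measurable ρX) (hρX0 : ∀ x, 0 ≤ ρX x) (hρXsupp : ∀ x ≤ 0, ρX x = 0)
    (hXlaw : μ.map X = ENNReal.ofReal p₀ • Measure.dirac 0
      + volume.withDensity fun x => ENNReal.ofReal (ρX x))
    {f : ℝ → E} (hf : StronglyMeasurable f) {M : ℝ} (hfM : ∀ t, ‖f t‖ ≤ M) :
    ∫ ω, f (Glam lam (X ω) (-(a * lam)) (Om ω)) ∂μ
      = (p₀ * (μ {ω | a < Om ω}).toReal) • f a
        + (∫ u in Ioo 0 a, ((p₀ + ∫ x in Ico 0 (a - u), ρX x) * ρ u) • f u)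
        + ∫ u in Ioo 0 a,
            (∫ x in Ioi (a - u), ρ (u * x / (a - u)) * (a * x / (a - u) ^ 2) * ρX x) • f u := by
  have hρint : Integrable ρ :=
    integrable_of_isFiniteMeasure_withDensity_ofReal hρ hρ0 (hOlaw ▸ inferInstance)
  have hρXint : Integrable ρX := integrable_of_isFiniteMeasure_withDensity_ofReal hρX hρX0
    (isFiniteMeasure_of_le (μ.map X) (hXlaw ▸ Measure.le_add_left le_rfl))
  have hF : Integrable (fun p : ℝ × ℝ => f (Glam lam p.1 (-(a * lam)) p.2))
      ((μ.map X).prod (μ.map Om)) :=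
    .of_bound (hf.comp_measurable (measurable_Glam lam _)).aestronglyMeasurable M
      (ae_of_all _ fun _ => hfM _)
  have hΨ := hF.integral_prod_left
  rw [hXlaw] at hΨ
  rw [hindep.integral_comp_eq_integral_integral_s9 hX hOm hF, hXlaw,
    integral_smul_dirac_add_withDensity hρX hρX0 hp₀ hΨ]
  simp_rw [hOlaw, integral_withDensity_ofReal hρ hρ0]
  rw [integral_smul_Glam_zero_neg_mul hlam ha hρsupp
      (integrable_smul_comp_Glam hρint hf hfM _ _ _),
    integral_smul_integral_smul_Glam hlam ha hρ hρ0 hρsupp hρint hρX hρX0 hρXsupp hρXint hf hfM,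
    ← toReal_measure_preimage_eq_setIntegral hOm hρ hρ0 hOlaw measurableSet_Ioi]
  have hsplit : ∫ u in Ioo 0 a, ((p₀ + ∫ x in Ico 0 (a - u), ρX x) * ρ u) • f u
      = p₀ • (∫ u in Ioo 0 a, ρ u • f u)
        + ∫ u in Ioo 0 a, (ρ u * ∫ x in Ico 0 (a - u), ρX x) • f u := by
    rw [← integral_smul, ← integral_add (f := fun u => p₀ • (ρ u • f u))
      ((hρint.smul_bdd M hf.aestronglyMeasurable (ae_of_all _ hfM)).integrableOn.smul p₀)
      (integrableOn_mul_integral_Ico_smul hρint hρX0 hρXint hf hfM)]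
    congr 1 with u
    rw [smul_smul, ← add_smul]
    ring_nf
  rw [hsplit, smul_add, smul_smul]
  change _ = (p₀ * (μ (Om ⁻¹' Ioi a)).toReal) • f a + _ + _
  abel

lemma norm_exp_I_mul_ofReal_sub_one_le_two (x : ℝ) : ‖Complex.exp (Complex.I * x) - 1‖ ≤ 2 := by
  rw [Complex.norm_exp_I_mul_ofReal_sub_one, norm_mul, Real.norm_two]
  nlinarith [Real.abs_sin_le_one (x / 2), Real.norm_eq_abs (Real.sin (x / 2))]

/-- For `λ ∈ (0,1]`, `a > 0`, `Ω` with density `ρ_Ω` on `(0,∞)` and an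
independent `X ≥ 0` with law `p₀·δ₀ + ρ_X(x)dx`, the kernel
`E[e^{ikG_λ(X,−aλ,Ω)} − 1]` equals
`p₀ P(Ω>a)(e^{ika}−1) + ∫₀^a P(X∈[0,a−u)) ρ_Ω(u)(e^{iku}−1) du
 + ∫₀^a (∫_{a−u}^∞ ρ_Ω(ux/(a−u)) (ax/(a−u)²) ρ_X(x) dx)(e^{iku}−1) du`,
with `P(X∈[0,a−u)) = p₀ + ∫₀^{a−u} ρ_X(x) dx`. -/
theorem stmt9
    (lam : ℝ) (hlam : lam ∈ Set.Ioc (0:ℝ) 1) (a : ℝ) (ha : 0 < a)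
    (Ωs : Type) [MeasurableSpace Ωs] (μ : Measure Ωs) [IsProbabilityMeasure μ]
    (X Om : Ωs → ℝ) (hXm : Measurable X) (hOm : Measurable Om)
    -- `X` and `Ω` are independent:
    (hindep : IndepFun X Om μ)
    (ρOm : ℝ → ℝ) (hρOm : Measurable ρOm) (hρOm0 : ∀ x, 0 ≤ ρOm x)
    (hρOmsupp : ∀ x ≤ (0:ℝ), ρOm x = 0)
    -- `Ω` has density `ρ_Ω` supported on `(0,∞)`:
    (hOlaw : Measure.map Om μ = volume.withDensity fun x => ENNReal.ofReal (ρOm x))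
    (p₀ : ℝ) (hp₀ : p₀ ∈ Set.Icc (0:ℝ) 1)
    (ρX : ℝ → ℝ) (hρX : Measurable ρX) (hρX0 : ∀ x, 0 ≤ ρX x)
    (hρXsupp : ∀ x ≤ (0:ℝ), ρX x = 0)
    -- `X` has law `p₀·δ₀ + ρ_X(x)dx`:
    (hXlaw : Measure.map X μ
      = ENNReal.ofReal p₀ • Measure.dirac (0:ℝ)
        + volume.withDensity fun x => ENNReal.ofReal (ρX x))
    (k : ℝ) :
    ∫ ω, (Complex.exp (Complex.I * (k : ℂ) * (Glam lam (X ω) (-(a * lam)) (Om ω) : ℝ)) - 1) ∂μ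
      = (p₀ : ℂ) * ((μ {ω | a < Om ω}).toReal : ℝ)
          * (Complex.exp (Complex.I * (k : ℂ) * (a : ℂ)) - 1)
        + (∫ u in Set.Ioo (0:ℝ) a,
            ((p₀ + ∫ x in Set.Ico (0:ℝ) (a - u), ρX x : ℝ) : ℂ) * (ρOm u : ℂ)
              * (Complex.exp (Complex.I * (k : ℂ) * (u : ℂ)) - 1))
        + ∫ u in Set.Ioo (0:ℝ) a,
            ((∫ x in Set.Ioi (a - u),
                ρOm (u * x / (a - u)) * (a * x / (a - u) ^ 2) * ρX x : ℝ) : ℂ)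
              * (Complex.exp (Complex.I * (k : ℂ) * (u : ℂ)) - 1) := by
  have hfM (t : ℝ) : ‖Complex.exp (Complex.I * k * t) - 1‖ ≤ 2 := by
    rw [mul_assoc, ← Complex.ofReal_mul]
    exact norm_exp_I_mul_ofReal_sub_one_le_two _
  refine (integral_comp_Glam_of_indepFun hlam.1.ne' ha hXm hOm hindep hρOm hρOm0 hρOmsupp hOlaw
    hp₀.1 hρX hρX0 hρXsupp hXlaw (by fun_prop : Measurable _).stronglyMeasurable hfM).trans ?_
  simp only [Complex.real_smul, Complex.ofReal_mul]
end

section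
/- Let (V, E) be a finite directed tree (E ⊆ V × V, no self-loops, at most one of (v,w),(w,v) in E, underlying undirected graph a tree). Fix λ ∈ (0,1]. On a probability space let {Δ⁰_u}_{u∈V} be real-valued random variables and {Ω̄_e}_{e∈E} be nonnegative random variables. Define the Eisenberg–Noe shock transmission function G_λ(x,y,z) := z·min(1, max(−y/(λ(x+z)), 0)) for z > 0 and G_λ(x,y,0) := 0. For (w,v) ∈ E set X_{w∖v} := Σ_{u : (w,u)∈E, u≠v} Ω̄_{(w,u)}, and define the solvency cascade recursively by: Δ^{(0)}_v := Δ⁰_v; S^{(n)}_{wv} := G_λ( X_{w∖v}, Δ^{(n)}_w, Ω̄_{(w,v)} ) for (w,v) ∈ E; S^{(n)}_v := Σ_{w : (w,v)∈E} S^{(n)}_{wv}; and Δ^{(n+1)}_v := Δ⁰_v − S^{(n)}_v. For A ⊆ V ∪ E let σ(A) denote the σ-algebra generated by the random variables {Δ⁰_u : u ∈ A ∩ V} ∪ {Ω̄_e : e ∈ A ∩ E}. Then for every n ≥ 0: (1) for every v ∈ V, Δ^{(n)}_v is σ(M⁻_v ∪ {v})-measurable; (2) for every (w,v) ∈ E,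 S^{(n)}_{wv} is σ( M⁻_w ∪ M⁺_{w∖v} ∪ {w} ∪ {(w,v)} )-measurable; (3) for every v ∈ V, S^{(n)}_v is σ(M⁻_v)-measurable. (This is the locally tree-like independence property of the solvency cascade mechanism.) -/
open MeasureTheory

/-- The undirected adjacency relation underlying a directed edge set `E`. -/
def adjOf {V : Type} (E : Set (V × V)) (a b : V) : Prop := (a, b) ∈ E ∨ (b, a) ∈ E

/-- Reachability in the underlying undirected graph avoiding the node `u`. -/
def reachAvoid {V : Type} (E : Set (V × V)) (u : V) (w x : V) : Prop :=
  Relation.ReflTransGen (fun a b => adjOf E a b ∧ a ≠ u ∧ b ≠ u) w x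

/-- The branch `B_u(w)` at `u` through a neighbour `w`, as a subset of `V ⊕ E`. -/
def branch {V : Type} (E : Set (V × V)) (u w : V) : Set (V ⊕ (V × V)) :=
  (Sum.inl '' {x | reachAvoid E u w x}) ∪
    (Sum.inr '' {e | e ∈ E ∧ reachAvoid E u w e.1 ∧ reachAvoid E u w e.2})

/-- `M⁻_u`: nodes and edges connected to `u` by a path whose final edge is directed
into `u`. -/
def Mminus {V : Type} (E : Set (V × V)) (u : V) : Set (V ⊕ (V × V)) :=
  ⋃ w ∈ {w | (w, u) ∈ E}, insert (Sum.inr (w, u)) (branch E u w)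

/-- `M⁺_{w∖v}`: nodes and edges connected to `w` by a path whose final edge is directed
out of `w` but is not the edge `(w,v)`. -/
def MplusEx {V : Type} (E : Set (V × V)) (w v : V) : Set (V ⊕ (V × V)) :=
  ⋃ u ∈ {u | (w, u) ∈ E ∧ u ≠ v}, insert (Sum.inr (w, u)) (branch E w u)

/-- `X_{w∖v} = Σ_{u : (w,u) ∈ E, u ≠ v} Ω̄_{(w,u)}`. -/
def Xexc {V Ωs : Type} [Fintype V] [DecidableEq V] (E : Finset (V × V))
    (Om : V × V → Ωs → ℝ) (w v : V) (ω : Ωs) : ℝ :=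
  ∑ u ∈ Finset.univ.filter (fun u => (w, u) ∈ E ∧ u ≠ v), Om (w, u) ω

/-- The solvency cascade: `Δ^{(0)}_v = Δ⁰_v` and
`Δ^{(n+1)}_v = Δ⁰_v − Σ_{w : (w,v)∈E} G_λ(X_{w∖v}, Δ^{(n)}_w, Ω̄_{(w,v)})`. -/
noncomputable def cascadeDelta {V Ωs : Type} [Fintype V] [DecidableEq V] (lam : ℝ)
    (E : Finset (V × V)) (Δ0 : V → Ωs → ℝ) (Om : V × V → Ωs → ℝ) :
    ℕ → V → Ωs → ℝ
  | 0 => Δ0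
  | n + 1 => fun v ω => Δ0 v ω -
      ∑ w ∈ Finset.univ.filter (fun w => (w, v) ∈ E),
        Glam lam (Xexc E Om w v ω) (cascadeDelta lam E Δ0 Om n w ω) (Om (w, v) ω)

/-- `σ(A)`: the σ-algebra on the sample space generated by the random variables
`{Δ⁰_u : u ∈ A ∩ V} ∪ {Ω̄_e : e ∈ A ∩ E}`. -/
def sigmaOf {V Ωs : Type} (Δ0 : V → Ωs → ℝ) (Om : V × V → Ωs → ℝ)
    (A : Set (V ⊕ (V × V))) : MeasurableSpace Ωs :=
  (⨆ u ∈ {u : V | Sum.inl u ∈ A}, MeasurableSpace.comap (Δ0 u) inferInstance) ⊔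
    (⨆ e ∈ {e : V × V | Sum.inr e ∈ A}, MeasurableSpace.comap (Om e) inferInstance)

/-! Induction on `n`. The shock `S^{(n)}_{wv}` is a measurable function of `Δ^{(n)}_w`, of the
out-weights of `w` other than `Ω̄_{(w,v)}`, and of `Ω̄_{(w,v)}`. All of these live on
`{(w,v)} ∪ B_v(w)`: in a tree, a branch at `w` through a neighbour `u ≠ v` cannot reach `v`
(that would close the cycle `u ⋯ v w u`), so it lies inside the branch at `v` through `w`. -/

section TreeCombinatorics

variable {V : Type} {Es : Set (V × V)}

abbrev underlyingGraph (Es : Set (V × V)) : SimpleGraph V :=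
  SimpleGraph.fromRel (fun a b => (a, b) ∈ Es)

lemma ne_of_adjOf (hloop : ∀ v, (v, v) ∉ Es) {a b : V} (h : adjOf Es a b) : a ≠ b := by
  rintro rfl
  rcases h with h | h <;> exact hloop _ h

lemma underlyingGraph_adj_of_adjOf (hloop : ∀ v, (v, v) ∉ Es) {a b : V} (h : adjOf Es a b) :
    (underlyingGraph Es).Adj a b :=
  (SimpleGraph.fromRel_adj _ _ _).2 ⟨ne_of_adjOf hloop h, h⟩

lemma exists_walk_of_reachAvoid {u w x : V} (hw : w ≠ u) (h : reachAvoid Es u w x) :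
    ∃ p : (underlyingGraph Es).Walk w x, u ∉ p.support := by
  induction h with
  | refl => exact ⟨.nil, by simpa using hw.symm⟩
  | @tail b c _ hbc ih =>
    obtain ⟨p, hp⟩ := ih
    by_cases hbc' : b = c
    · subst hbc'
      exact ⟨p, hp⟩
    · refine ⟨p.concat ((SimpleGraph.fromRel_adj _ _ _).2 ⟨hbc', hbc.1⟩), ?_⟩
      simp [SimpleGraph.Walk.support_concat, hp, Ne.symm hbc.2.2]

lemma ne_of_reachAvoid_of_isAcyclic (hloop : ∀ v, (v, v) ∉ Es)
    (hacyc : (underlyingGraph Es).IsAcyclic) {u v w x : V} (hwv : adjOf Es w v)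
    (hwu : adjOf Es w u) (huv : u ≠ v) (hx : reachAvoid Es w u x) : x ≠ v := by
  classical
  rintro rfl
  have huw : u ≠ w := (ne_of_adjOf hloop hwu).symm
  obtain ⟨p, hp⟩ := exists_walk_of_reachAvoid huw hx
  have hq : (SimpleGraph.Walk.cons (underlyingGraph_adj_of_adjOf hloop hwu.symm)
      (SimpleGraph.Walk.cons (underlyingGraph_adj_of_adjOf hloop hwv)
        SimpleGraph.Walk.nil)).IsPath := by
    simp [SimpleGraph.Walk.isPath_def, huw, huv, ne_of_adjOf hloop hwv]
  have hpath := (hacyc.subsingleton_path u x).elim ⟨_, hq⟩ p.toPath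
  have hw : w ∈ (p.toPath : (underlyingGraph Es).Walk u x).support := by
    rw [← hpath]
    simp
  exact hp (p.support_toPath_subset_support hw)

lemma reachAvoid_of_isAcyclic (hloop : ∀ v, (v, v) ∉ Es)
    (hacyc : (underlyingGraph Es).IsAcyclic) {u v w x : V} (hwv : adjOf Es w v)
    (hwu : adjOf Es w u) (huv : u ≠ v) (hx : reachAvoid Es w u x) : reachAvoid Es v w x := by
  induction hx with
  | refl => exact .single ⟨hwu, ne_of_adjOf hloop hwv, huv⟩
  | tail hab hbc ih =>
    exact ih.tail ⟨hbc.1, ne_of_reachAvoid_of_isAcyclic hloop hacyc hwv hwu huv hab,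
      ne_of_reachAvoid_of_isAcyclic hloop hacyc hwv hwu huv (hab.tail hbc)⟩

lemma insert_branch_subset_branch (hloop : ∀ v, (v, v) ∉ Es)
    (hacyc : (underlyingGraph Es).IsAcyclic) {u v w : V} (hwv : adjOf Es w v) (huv : u ≠ v)
    {e : V × V} (he : e ∈ Es)
    (hends : e = (w, u) ∨ e = (u, w)) :
    insert (Sum.inr e) (branch Es w u) ⊆ branch Es v w := by
  have hwu : adjOf Es w u := by rcases hends with rfl | rfl <;> [exact .inl he; exact .inr he]
  have hu : reachAvoid Es v w u := .single ⟨hwu, ne_of_adjOf hloop hwv, huv⟩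
  rintro z (rfl | ⟨y, hy, rfl⟩ | ⟨e', ⟨he', h1, h2⟩, rfl⟩)
  · refine .inr ⟨e, ⟨he, ?_⟩, rfl⟩
    rcases hends with rfl | rfl
    exacts [⟨.refl, hu⟩, ⟨hu, .refl⟩]
  · exact .inl ⟨y, reachAvoid_of_isAcyclic hloop hacyc hwv hwu huv hy, rfl⟩
  · exact .inr ⟨e', ⟨he', reachAvoid_of_isAcyclic hloop hacyc hwv hwu huv h1,
      reachAvoid_of_isAcyclic hloop hacyc hwv hwu huv h2⟩, rfl⟩

lemma Mminus_union_MplusEx_subset_branch (hloop : ∀ v, (v, v) ∉ Es)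
    (hanti : ∀ v w, (v, w) ∈ Es → (w, v) ∉ Es) (hacyc : (underlyingGraph Es).IsAcyclic)
    {w v : V}
    (hwv : (w, v) ∈ Es) : Mminus Es w ∪ MplusEx Es w v ⊆ branch Es v w := by
  refine Set.union_subset (Set.iUnion₂_subset fun u hu => ?_)
    (Set.iUnion₂_subset fun u hu => ?_)
  · exact insert_branch_subset_branch hloop hacyc (.inl hwv)
      (by rintro rfl; exact hanti _ _ hu hwv) hu (.inr rfl)
  · exact insert_branch_subset_branch hloop hacyc (.inl hwv) hu.2 hu.1 (.inl rfl)

lemma Mminus_union_MplusEx_union_subset_Mminus (hloop : ∀ v, (v, v) ∉ Es)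
    (hanti : ∀ v w, (v, w) ∈ Es → (w, v) ∉ Es) (hacyc : (underlyingGraph Es).IsAcyclic)
    {w v : V}
    (hwv : (w, v) ∈ Es) :
    Mminus Es w ∪ MplusEx Es w v ∪ {Sum.inl w} ∪ {Sum.inr (w, v)} ⊆ Mminus Es v := by
  have hbranch := Mminus_union_MplusEx_subset_branch hloop hanti hacyc hwv
  have hw : Sum.inl w ∈ branch Es v w := .inl ⟨w, .refl, rfl⟩
  refine subset_trans ?_ (Set.subset_biUnion_of_mem
    (u := fun w' => insert (Sum.inr (w', v)) (branch Es v w')) hwv)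
  rintro z (((hz | hz) | rfl) | rfl)
  exacts [.inr (hbranch (.inl hz)), .inr (hbranch (.inr hz)), .inr hw, .inl rfl]

end TreeCombinatorics

section SigmaOf

variable {V Ωs : Type} (Δ0 : V → Ωs → ℝ) (Om : V × V → Ωs → ℝ)

lemma sigmaOf_mono {A B : Set (V ⊕ (V × V))} (h : A ⊆ B) :
    sigmaOf Δ0 Om A ≤ sigmaOf Δ0 Om B :=
  sup_le_sup (biSup_mono fun _ hu => h hu) (biSup_mono fun _ he => h he)

lemma measurable_Δ0_sigmaOf {A : Set (V ⊕ (V × V))} {u : V} (h : Sum.inl u ∈ A) :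
    Measurable[sigmaOf Δ0 Om A] (Δ0 u) :=
  Measurable.of_comap_le (le_sup_of_le_left
    (le_iSup₂ (f := fun u _ => MeasurableSpace.comap (Δ0 u) inferInstance) u h))

lemma measurable_Om_sigmaOf {A : Set (V ⊕ (V × V))} {e : V × V} (h : Sum.inr e ∈ A) :
    Measurable[sigmaOf Δ0 Om A] (Om e) :=
  Measurable.of_comap_le (le_sup_of_le_right
    (le_iSup₂ (f := fun e _ => MeasurableSpace.comap (Om e) inferInstance) e h))

end SigmaOf

lemma Measurable.glam {Ωs : Type} {m : MeasurableSpace Ωs} {lam : ℝ} {f g h : Ωs → ℝ}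
    (hf : Measurable f) (hg : Measurable g) (hh : Measurable h) :
    Measurable fun ω => Glam lam (f ω) (g ω) (h ω) :=
  hh.mul (measurable_const.min
    ((hg.div (measurable_const.mul (hf.add hh))).neg.max measurable_const))

section Cascade

variable {V Ωs : Type} [Fintype V] [DecidableEq V] {E : Finset (V × V)} {lam : ℝ}
  {Δ0 : V → Ωs → ℝ} {Om : V × V → Ωs → ℝ}

lemma measurable_Xexc (w v : V) :
    Measurable[sigmaOf Δ0 Om (MplusEx (↑E : Set (V × V)) w v)] (Xexc E Om w v) :=
  Finset.measurable_sum _ fun _ hu =>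
    measurable_Om_sigmaOf Δ0 Om (Set.mem_biUnion (Finset.mem_filter.1 hu).2 (Set.mem_insert _ _))

lemma measurable_shock {D : Ωs → ℝ} {w : V}
    (hD : Measurable[sigmaOf Δ0 Om (Mminus (↑E : Set (V × V)) w ∪ {Sum.inl w})] D) (v : V) :
    Measurable[sigmaOf Δ0 Om
        (Mminus (↑E : Set (V × V)) w ∪ MplusEx (↑E : Set (V × V)) w v
          ∪ {Sum.inl w} ∪ {Sum.inr (w, v)})]
      (fun ω => Glam lam (Xexc E Om w v ω) (D ω) (Om (w, v) ω)) := by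
  refine Measurable.glam ?_ ?_ (measurable_Om_sigmaOf Δ0 Om (.inr rfl))
  · exact (measurable_Xexc w v).mono
      (sigmaOf_mono Δ0 Om fun _ hz => .inl (.inl (.inr hz))) le_rfl
  · refine hD.mono (sigmaOf_mono Δ0 Om ?_) le_rfl
    rintro z (hz | hz)
    exacts [.inl (.inl (.inl hz)), .inl (.inr hz)]

lemma measurable_inflow (hloop : ∀ v, (v, v) ∉ E)
    (hanti : ∀ v w, (v, w) ∈ E → (w, v) ∉ E)
    (hacyc : (SimpleGraph.fromRel (fun a b => (a, b) ∈ E)).IsAcyclic) {D : V → Ωs → ℝ}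
    (hD : ∀ w, Measurable[sigmaOf Δ0 Om (Mminus (↑E : Set (V × V)) w ∪ {Sum.inl w})] (D w))
    (v : V) :
    Measurable[sigmaOf Δ0 Om (Mminus (↑E : Set (V × V)) v)]
      (fun ω => ∑ w ∈ Finset.univ.filter (fun w => (w, v) ∈ E),
        Glam lam (Xexc E Om w v ω) (D w ω) (Om (w, v) ω)) := by
  refine Finset.measurable_sum _ fun w hw => ?_
  have hsub := Mminus_union_MplusEx_union_subset_Mminus (Es := (E : Set (V × V))) hloop hanti hacyc
    (Finset.mem_filter.1 hw).2
  exact (measurable_shock (hD w) v).mono (sigmaOf_mono Δ0 Om hsub) le_rfl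

lemma measurable_cascadeDelta (hloop : ∀ v, (v, v) ∉ E)
    (hanti : ∀ v w, (v, w) ∈ E → (w, v) ∉ E)
    (hacyc : (SimpleGraph.fromRel (fun a b => (a, b) ∈ E)).IsAcyclic) (n : ℕ) (v : V) :
    Measurable[sigmaOf Δ0 Om (Mminus (↑E : Set (V × V)) v ∪ {Sum.inl v})]
      (cascadeDelta lam E Δ0 Om n v) := by
  induction n generalizing v with
  | zero => exact measurable_Δ0_sigmaOf Δ0 Om (.inr rfl)
  | succ n ih =>
    exact (measurable_Δ0_sigmaOf Δ0 Om (.inr rfl)).sub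
      ((measurable_inflow hloop hanti hacyc ih v).mono
        (sigmaOf_mono Δ0 Om Set.subset_union_left) le_rfl)

end Cascade

theorem stmt11_general
    (V : Type) [Fintype V] [DecidableEq V]
    (Ωs : Type)
    (E : Finset (V × V))
    (hloop : ∀ v, (v, v) ∉ E)
    (hanti : ∀ v w, (v, w) ∈ E → (w, v) ∉ E)
    -- the underlying undirected graph is a tree (connected and acyclic):
    (htree : (SimpleGraph.fromRel (fun a b => (a, b) ∈ E)).IsTree)
    (lam : ℝ)
    (Δ0 : V → Ωs → ℝ) (Om : V × V → Ωs → ℝ) :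
    ∀ n : ℕ,
      (∀ v : V,
        Measurable[sigmaOf Δ0 Om (Mminus (↑E : Set (V × V)) v ∪ {Sum.inl v})]
          (cascadeDelta lam E Δ0 Om n v))
      ∧ (∀ w v : V, (w, v) ∈ E →
        Measurable[sigmaOf Δ0 Om
            (Mminus (↑E : Set (V × V)) w ∪ MplusEx (↑E : Set (V × V)) w v
              ∪ {Sum.inl w} ∪ {Sum.inr (w, v)})]
          (fun ω => Glam lam (Xexc E Om w v ω) (cascadeDelta lam E Δ0 Om n w ω)
            (Om (w, v) ω)))
      ∧ (∀ v : V,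
        Measurable[sigmaOf Δ0 Om (Mminus (↑E : Set (V × V)) v)]
          (fun ω => ∑ w ∈ Finset.univ.filter (fun w => (w, v) ∈ E),
            Glam lam (Xexc E Om w v ω) (cascadeDelta lam E Δ0 Om n w ω) (Om (w, v) ω))) := by
  intro n
  have hDelta := measurable_cascadeDelta (lam := lam) (Δ0 := Δ0) (Om := Om)
    hloop hanti htree.isAcyclic n
  exact ⟨hDelta, fun w v _ => measurable_shock (hDelta w) v,
    measurable_inflow hloop hanti htree.isAcyclic hDelta⟩

/-- locally tree-like independence of the Eisenberg–Noe solvency cascade.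
On a finite directed tree, for every `n ≥ 0`:
(1) `Δ^{(n)}_v` is `σ(M⁻_v ∪ {v})`-measurable;
(2) `S^{(n)}_{wv}` is `σ(M⁻_w ∪ M⁺_{w∖v} ∪ {w} ∪ {(w,v)})`-measurable;
(3) `S^{(n)}_v` is `σ(M⁻_v)`-measurable. -/
theorem stmt11
    (V : Type) [Fintype V] [DecidableEq V]
    (Ωs : Type) [MeasurableSpace Ωs] (μ : Measure Ωs)
    [IsProbabilityMeasure μ]
    (E : Finset (V × V))
    (hloop : ∀ v, (v, v) ∉ E)
    (hanti : ∀ v w, (v, w) ∈ E → (w, v) ∉ E)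
    -- the underlying undirected graph is a tree (connected and acyclic):
    (htree : (SimpleGraph.fromRel (fun a b => (a, b) ∈ E)).IsTree)
    (lam : ℝ) (hlam : lam ∈ Set.Ioc (0:ℝ) 1)
    (Δ0 : V → Ωs → ℝ) (Om : V × V → Ωs → ℝ)
    (hΔ0m : ∀ v, Measurable (Δ0 v)) (hOmm : ∀ e, Measurable (Om e))
    (hOm0 : ∀ e ω, 0 ≤ Om e ω) :
    ∀ n : ℕ,
      (∀ v : V,
        Measurable[sigmaOf Δ0 Om (Mminus (↑E : Set (V × V)) v ∪ {Sum.inl v})]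
          (cascadeDelta lam E Δ0 Om n v))
      ∧ (∀ w v : V, (w, v) ∈ E →
        Measurable[sigmaOf Δ0 Om
            (Mminus (↑E : Set (V × V)) w ∪ MplusEx (↑E : Set (V × V)) w v
              ∪ {Sum.inl w} ∪ {Sum.inr (w, v)})]
          (fun ω => Glam lam (Xexc E Om w v ω) (cascadeDelta lam E Δ0 Om n w ω)
            (Om (w, v) ω)))
      ∧ (∀ v : V,
        Measurable[sigmaOf Δ0 Om (Mminus (↑E : Set (V × V)) v)]
          (fun ω => ∑ w ∈ Finset.univ.filter (fun w => (w, v) ∈ E),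
            Glam lam (Xexc E Om w v ω) (cascadeDelta lam E Δ0 Om n w ω) (Om (w, v) ω))) :=
  stmt11_general V Ωs E hloop hanti htree lam Δ0 Om
end
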